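/- arXiv:2106.12568 — 6 statements merged into one kernel-verified Lean document; each statement's English description precedes it below -/
import Mathlib

section
/- Let m, n be positive integers, let A be an m×n matrix with rational entries and let b ∈ ℚ^m. If the linear system A x = b has a solution x ∈ ℝ^n all of whose coordinates are strictly positive, then it also has a solution x' ∈ ℚ^n all of whose coordinates are strictly positive. -/
/-- If a linear system `A x = b` with rational coefficients has a real solution
with all coordinates strictly positive, then it has a rational solution with all coordinates
strictly positive. -/
theorem rational_system_positive_rational_solution
    (m n : ℕ) (hm : 0 < m) (hn : 0 < n)
    (A : Matrix (Fin m) (Fin n) ℚ) (b : Fin m → ℚ)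
    (x : Fin n → ℝ)
    (hsol : (A.map ((↑) : ℚ → ℝ)).mulVec x = fun i => (b i : ℝ))
    (hpos : ∀ j, 0 < x j) :
    ∃ x' : Fin n → ℚ, A.mulVec x' = b ∧ ∀ j, 0 < x' j := by
  classical
  set V : Submodule ℚ ℝ := Submodule.span ℚ (insert 1 (Set.range x)) with hV
  haveI hfin : FiniteDimensional ℚ V :=
    FiniteDimensional.span_of_finite ℚ ((Set.finite_range x).insert 1)
  have h1V : (1 : ℝ) ∈ V := Submodule.subset_span (Set.mem_insert _ _)
  have hxV : ∀ j, x j ∈ V := fun j =>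
    Submodule.subset_span (Set.mem_insert_of_mem _ ⟨j, rfl⟩)
  set e1 : V := ⟨1, h1V⟩ with he1def
  have he1 : e1 ≠ 0 := by
    intro h
    exact one_ne_zero (α := ℝ) (congrArg Subtype.val h)
  have hs : LinearIndepOn ℚ id ({e1} : Set V) :=
    LinearIndepOn.singleton he1
  let ιs : Set V := hs.extend (Set.subset_univ _)
  let B : Module.Basis ιs ℚ V := Module.Basis.extend hs
  haveI : Fintype ιs := FiniteDimensional.fintypeBasisIndex B
  have he1m : e1 ∈ ιs := hs.subset_extend _ rfl
  let i0 : ιs := ⟨e1, he1m⟩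
  have hBi0 : B i0 = e1 := Module.Basis.extend_apply_self hs i0
  -- coefficients of the x j's in the basis
  set c : Fin n → ιs → ℚ := fun j i => B.repr ⟨x j, hxV j⟩ i with hc
  set s : ιs → ℝ := fun i => ((B i : V) : ℝ) with hsdef
  have hx_eq : ∀ j, ∑ i, (c j i : ℝ) * s i = x j := by
    intro j
    have h := B.sum_repr ⟨x j, hxV j⟩
    have h2 := congrArg (Subtype.val : V → ℝ) h
    simp only [Submodule.coe_sum, Submodule.coe_smul, Rat.smul_def] at h2
    simpa only [hc, hsdef] using h2
  -- choose δ
  set C : Fin n → ℚ := fun j => ∑ i, |c j i| with hC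
  have hCnn : ∀ j, (0 : ℚ) ≤ C j := fun j => Finset.sum_nonneg fun i _ => abs_nonneg _
  haveI : Nonempty (Fin n) := ⟨⟨0, hn⟩⟩
  set δ : ℝ := Finset.univ.inf' Finset.univ_nonempty (fun j => x j / ((C j : ℝ) + 1)) with hδ
  have hδpos : 0 < δ := by
    rw [hδ, Finset.lt_inf'_iff]
    intro j _
    have : (0 : ℝ) < (C j : ℝ) + 1 := by positivity
    exact div_pos (hpos j) this
  have hδle : ∀ j, δ ≤ x j / ((C j : ℝ) + 1) := fun j =>
    Finset.inf'_le _ (Finset.mem_univ j)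
  -- choose rational approximations
  have hr : ∀ i : ιs, ∃ q : ℚ, |s i - (q : ℝ)| < δ ∧ (i = i0 → q = 1) := by
    intro i
    by_cases hi : i = i0
    · refine ⟨1, ?_, fun _ => rfl⟩
      have : s i = 1 := by
        simp only [hi, hsdef, hBi0, he1def]
      simpa [this] using hδpos
    · obtain ⟨q, hq⟩ := exists_rat_near (s i) hδpos
      exact ⟨q, hq, fun h => absurd h hi⟩
  choose r hrnear hri0 using hr
  -- the linear functional
  set φ : V →ₗ[ℚ] ℚ := B.constr ℚ r with hφ
  have hφ1 : φ e1 = 1 := by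
    rw [← hBi0, hφ, Module.Basis.constr_basis]
    exact hri0 i0 rfl
  set x' : Fin n → ℚ := fun j => φ ⟨x j, hxV j⟩ with hx'
  have hx'def : ∀ j, x' j = φ ⟨x j, hxV j⟩ := fun j => rfl
  have hx'val : ∀ j, x' j = ∑ i, c j i * r i := by
    intro j
    rw [hx'def]
    conv_lhs => rw [← B.sum_repr ⟨x j, hxV j⟩]
    rw [map_sum]
    refine Finset.sum_congr rfl fun i _ => ?_
    rw [map_smul, hφ, Module.Basis.constr_basis, smul_eq_mul, hc]
  refine ⟨x', ?_, ?_⟩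
  · -- the system is satisfied
    funext i
    have hw : (∑ j, A i j • (⟨x j, hxV j⟩ : V)) = b i • e1 := by
      apply Subtype.ext
      have hrow := congrFun hsol i
      simp only [Matrix.mulVec, Matrix.map_apply, dotProduct] at hrow
      simpa [Submodule.coe_sum, Rat.smul_def, he1def] using hrow
    have := congrArg φ hw
    rw [map_sum, map_smul, hφ1, smul_eq_mul, mul_one] at this
    simp only [Matrix.mulVec, dotProduct]
    rw [← this]
    refine Finset.sum_congr rfl fun j _ => ?_
    rw [map_smul, smul_eq_mul, hx'def]
  · -- positivity
    intro j
    have key : |x j - (x' j : ℝ)| < x j := by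
      have h1 : x j - (x' j : ℝ) = ∑ i, (c j i : ℝ) * (s i - (r i : ℝ)) := by
        rw [← hx_eq j, hx'val j]
        push_cast
        rw [← Finset.sum_sub_distrib]
        exact Finset.sum_congr rfl fun i _ => by ring
      calc |x j - (x' j : ℝ)| ≤ ∑ i, |(c j i : ℝ)| * |s i - (r i : ℝ)| := by
            rw [h1]
            exact (Finset.abs_sum_le_sum_abs _ _).trans (le_of_eq (Finset.sum_congr rfl fun i _ => abs_mul _ _))
        _ ≤ ∑ i, |(c j i : ℝ)| * δ := by
            refine Finset.sum_le_sum fun i _ => ?_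
            exact mul_le_mul_of_nonneg_left (le_of_lt (hrnear i)) (abs_nonneg _)
        _ = (C j : ℝ) * δ := by
            rw [← Finset.sum_mul, hC]
            push_cast
            ring_nf
        _ < x j := by
            have hle : (C j : ℝ) * δ ≤ (C j : ℝ) * (x j / ((C j : ℝ) + 1)) :=
              mul_le_mul_of_nonneg_left (hδle j) (by exact_mod_cast hCnn j)
            have hlt : (C j : ℝ) * (x j / ((C j : ℝ) + 1)) < x j := by
              rw [mul_div_assoc']
              rw [div_lt_iff₀ (by positivity)]
              have : (C j : ℝ) < (C j : ℝ) + 1 := by linarith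
              calc (C j : ℝ) * x j < ((C j : ℝ) + 1) * x j :=
                    (mul_lt_mul_of_pos_right this (hpos j))
                _ = x j * ((C j : ℝ) + 1) := by ring
            linarith
    have := abs_lt.mp key
    have h2 : (0 : ℝ) < (x' j : ℝ) := by linarith [this.2]
    exact_mod_cast h2
end

section
/- Let G be a connected loopless multigraph and let H be a subdivision of G. If D is a divisor on H that reaches every vertex of H which is the image of a vertex of G, then rank(D) ≥ 1. -/
/-! ## Loopless multigraphs, divisors, rank, gonality -/

/-- A finite loopless multigraph, given by a finite vertex set and a symmetric
edge-multiplicity function vanishing on the diagonal. -/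
structure Multigraph where
  V : Type
  fintypeV : Fintype V
  decEqV : DecidableEq V
  m : V → V → ℕ
  symm : ∀ u v, m u v = m v u
  loopless : ∀ v, m v v = 0

attribute [instance] Multigraph.fintypeV Multigraph.decEqV

namespace Multigraph

variable (G : Multigraph)

/-- A divisor on a multigraph. -/
abbrev Divisor := G.V → ℤ

/-- The degree of a divisor. -/
def deg (D : G.Divisor) : ℤ := ∑ v, D v

/-- A divisor is effective if it is nonnegative everywhere. -/
def Effective (D : G.Divisor) : Prop := ∀ v, 0 ≤ D v

/-- Principal divisors: images of the Laplacian. -/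
def Principal (D : G.Divisor) : Prop :=
  ∃ x : G.V → ℤ, ∀ v, D v = ∑ u, (G.m v u : ℤ) * (x v - x u)

/-- Two divisors are (linearly) equivalent if their difference is principal. -/
def DEquiv (D D' : G.Divisor) : Prop := G.Principal (fun v => D v - D' v)

/-- `RankGe G D k` means: for every effective divisor `E` of degree `k`,
`D - E` is equivalent to an effective divisor. -/
def RankGe (D : G.Divisor) (k : ℕ) : Prop :=
  ∀ E : G.Divisor, G.Effective E → G.deg E = (k : ℤ) →
    ∃ F : G.Divisor, G.Effective F ∧ G.DEquiv (fun v => D v - E v) F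

open Classical in
/-- The rank of a divisor: the largest `k ≥ 0` such that `D - E` is equivalent to an
effective divisor for every effective divisor `E` of degree `k`; and `-1` if `D` itself
is not equivalent to an effective divisor. -/
noncomputable def rank (D : G.Divisor) : ℤ :=
  if G.RankGe D 0 then ((sSup {k : ℕ | G.RankGe D k} : ℕ) : ℤ) else -1

/-- The divisorial gonality: the minimum degree of a divisor of rank at least 1. -/
noncomputable def dgon : ℤ :=
  sInf {d : ℤ | ∃ D : G.Divisor, 1 ≤ G.rank D ∧ G.deg D = d}

/-- The `r`-th divisorial gonality: the minimum degree of a divisor of rank at least `r`. -/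
noncomputable def dgonr (r : ℕ) : ℤ :=
  sInf {d : ℤ | ∃ D : G.Divisor, (r : ℤ) ≤ G.rank D ∧ G.deg D = d}

/-- A divisor reaches a vertex `v` if some equivalent effective divisor is positive at `v`. -/
def Reaches (D : G.Divisor) (v : G.V) : Prop :=
  ∃ D' : G.Divisor, G.Effective D' ∧ G.DEquiv D D' ∧ 0 < D' v

/-- A set `A` of vertices is valid with respect to `D` if every `v ∈ A` has at least as
many chips as edges leaving `A`. -/
def Valid (D : G.Divisor) (A : Finset G.V) : Prop :=
  ∀ v ∈ A, (∑ u ∈ Aᶜ, (G.m v u : ℤ)) ≤ D v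

/-- A divisor is `q`-reduced if it is nonnegative away from `q` and every nonempty valid set
contains `q`. -/
def Reduced (D : G.Divisor) (q : G.V) : Prop :=
  (∀ v, v ≠ q → 0 ≤ D v) ∧ ∀ A : Finset G.V, G.Valid D A → A.Nonempty → q ∈ A

/-- Reachability within a set `W` of vertices, along edges of positive multiplicity. -/
def ReachIn (W : Set G.V) (u v : G.V) : Prop :=
  Relation.ReflTransGen (fun a b => a ∈ W ∧ b ∈ W ∧ 0 < G.m a b) u v

/-- A multigraph is connected if it is nonempty and any two vertices are joined by a walk. -/
def Connected : Prop := Nonempty G.V ∧ ∀ u v : G.V, G.ReachIn Set.univ u v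

/-- `C` is a connected component of the subgraph induced on `W`. -/
def IsCompOf (W C : Finset G.V) : Prop :=
  ∃ u ∈ W, ∀ v, v ∈ C ↔ G.ReachIn (↑W) u v

/-- The induced (multi)graph on `C` is a tree: it is connected and has `|C| - 1` edges
(counted with multiplicity). -/
def IsTreeOn (C : Finset G.V) : Prop :=
  (∀ u ∈ C, ∀ v ∈ C, G.ReachIn (↑C) u v) ∧
    ∑ u ∈ C, ∑ v ∈ C, G.m u v = 2 * (C.card - 1)

/-- A strong separator: every connected component `C` of the complement induces a tree,
and every `s ∈ S` is joined to each such component by at most one edge. -/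
def StrongSeparator (S : Finset G.V) : Prop :=
  ∀ C : Finset G.V, G.IsCompOf Sᶜ C →
    G.IsTreeOn C ∧ ∀ s ∈ S, ∑ v ∈ C, G.m s v ≤ 1

end Multigraph

/-- The number of (ordered) occurrences of `(x, y)` as a consecutive pair in a list. -/
def adjCount {α : Type} [DecidableEq α] (x y : α) (l : List α) : ℕ :=
  (l.zip l.tail).count (x, y)

/-- A subdivision of the loopless multigraph `G`: every edge of `G` (with multiplicity)
is replaced by a path through fresh internal vertices, these paths being internally
disjoint and covering `H`. `path u v j` is the list of internal vertices of the path
replacing the `j`-th edge between `u` and `v`, in order from `u` to `v`. -/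
structure Subdivision (G H : Multigraph) where
  emb : G.V → H.V
  inj : Function.Injective emb
  path : (u v : G.V) → Fin (G.m u v) → List H.V
  rev : ∀ u v (j : Fin (G.m u v)),
    path v u (Fin.cast (G.symm u v) j) = (path u v j).reverse
  nodup : ∀ u v (j : Fin (G.m u v)), (path u v j).Nodup
  fresh : ∀ u v (j : Fin (G.m u v)), ∀ x ∈ path u v j, x ∉ Set.range emb
  disj : ∀ u v (j : Fin (G.m u v)) u' v' (j' : Fin (G.m u' v')) x,
    x ∈ path u v j → x ∈ path u' v' j' →
    (u = u' ∧ v = v' ∧ (j : ℕ) = (j' : ℕ)) ∨ (u = v' ∧ v = u' ∧ (j : ℕ) = (j' : ℕ))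
  cover : ∀ x : H.V, x ∈ Set.range emb ∨ ∃ u, ∃ v, ∃ j : Fin (G.m u v), x ∈ path u v j
  edges : ∀ x y : H.V,
    H.m x y = ∑ u, ∑ v, ∑ j : Fin (G.m u v),
      adjCount x y (emb u :: (path u v j ++ [emb v]))

/-- `H` is (isomorphic to) the `k`-th regular subdivision `σ_k(G)`: every edge of `G` is
replaced by a path with exactly `k` edges, i.e. `k - 1` internal vertices. -/
def IsRegularSubdivision (k : ℕ) (G H : Multigraph) : Prop :=
  ∃ S : Subdivision G H, ∀ u v (j : Fin (G.m u v)), (S.path u v j).length = k - 1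

/-! ### Auxiliary lemmas -/

section Aux

namespace Multigraph

variable (G : Multigraph)

/-- The Laplacian as a function. -/
def mlap (x : G.V → ℤ) : G.Divisor := fun v => ∑ u, (G.m v u : ℤ) * (x v - x u)

variable {G}

lemma mlap_sub_apply (x y : G.V → ℤ) (v : G.V) :
    G.mlap (fun t => x t - y t) v = G.mlap x v - G.mlap y v := by
  simp only [mlap, ← Finset.sum_sub_distrib]
  exact Finset.sum_congr rfl fun u _ => by ring

lemma sum_mlap (x : G.V → ℤ) : ∑ v, G.mlap x v = 0 := by
  have h2 : ∑ v, ∑ u, (G.m v u : ℤ) * x u = ∑ v, ∑ u, (G.m v u : ℤ) * x v := by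
    rw [Finset.sum_comm]
    exact Finset.sum_congr rfl fun a _ => Finset.sum_congr rfl fun b _ => by rw [G.symm]
  simp only [mlap, mul_sub, Finset.sum_sub_distrib]
  rw [h2, sub_self]

lemma dequiv_of_mlap {D D' : G.Divisor} (x : G.V → ℤ) (h : ∀ v, D v - D' v = G.mlap x v) :
    G.DEquiv D D' := ⟨x, h⟩

lemma dequiv_deg_eq {A B : G.Divisor} (h : G.DEquiv A B) : G.deg A = G.deg B := by
  obtain ⟨x, hx⟩ := h
  have h0 : ∑ v, (A v - B v) = 0 := by
    rw [Finset.sum_congr rfl fun v _ => hx v]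
    exact sum_mlap x
  have h1 : ∑ v, A v - ∑ v, B v = 0 := by rw [← Finset.sum_sub_distrib]; exact h0
  exact sub_eq_zero.mp h1

end Multigraph

lemma adjCount_eq_zero_left {α : Type} [DecidableEq α] {x : α} (y : α) {M : List α}
    (h : x ∉ M) : adjCount x y M = 0 :=
  List.count_eq_zero.mpr fun hmem => h (List.of_mem_zip hmem).1

lemma adjCount_eq_zero_right {α : Type} [DecidableEq α] (y : α) {x : α} {M : List α}
    (h : x ∉ M.tail) : adjCount y x M = 0 :=
  List.count_eq_zero.mpr fun hmem => h (List.of_mem_zip hmem).2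

lemma adjCount_cons_cons {α : Type} [DecidableEq α] (x y a b : α) (M : List α) :
    adjCount x y (a :: b :: M) = adjCount x y (b :: M) + (if (a, b) = (x, y) then 1 else 0) := by
  unfold adjCount
  rw [List.tail_cons, List.tail_cons, List.zip_cons_cons, List.count_cons]
  simp [beq_iff_eq]

lemma adjCount_getD_left {α : Type} [DecidableEq α] (d : α) (M : List α) :
    M.Nodup → ∀ i, i + 1 < M.length → ∀ y,
      adjCount (M.getD i d) y M = if y = M.getD (i + 1) d then 1 else 0 := by
  induction M with
  | nil => intro _ i h; simp at h
  | cons a M ih =>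
    intro hnd i h y
    cases M with
    | nil => simp at h
    | cons b M' =>
      cases i with
      | zero =>
        simp only [List.getD_cons_zero, List.getD_cons_succ]
        rw [adjCount_cons_cons]
        have ha : a ∉ b :: M' := (List.nodup_cons.1 hnd).1
        rw [adjCount_eq_zero_left _ ha, zero_add]
        simp only [Prod.mk.injEq, true_and]
        by_cases hyb : y = b
        · subst hyb; simp
        · simp [hyb, Ne.symm hyb]
      | succ i =>
        rw [List.getD_cons_succ, adjCount_cons_cons]
        have hlen : i + 1 < (b :: M').length := by
          simpa [List.length_cons] using Nat.lt_of_succ_lt_succ h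
        have hx : (b :: M').getD i d ∈ b :: M' := by
          rw [List.getD_eq_getElem _ _ (by omega)]
          exact List.getElem_mem _
        have hxa : (b :: M').getD i d ≠ a := fun hh => (List.nodup_cons.1 hnd).1 (hh ▸ hx)
        have hneg : ¬((a, b) = ((b :: M').getD i d, y)) := fun hh =>
          hxa (Prod.ext_iff.1 hh).1.symm
        rw [if_neg hneg, add_zero, ih (List.nodup_cons.1 hnd).2 i hlen y]
        simp only [List.getD_cons_succ]

lemma adjCount_getD_right {α : Type} [DecidableEq α] (d : α) (M : List α) :
    M.Nodup → ∀ i, i + 1 < M.length → ∀ y,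
      adjCount y (M.getD (i + 1) d) M = if y = M.getD i d then 1 else 0 := by
  induction M with
  | nil => intro _ i h; simp at h
  | cons a M ih =>
    intro hnd i h y
    cases M with
    | nil => simp at h
    | cons b M' =>
      cases i with
      | zero =>
        simp only [List.getD_cons_zero, List.getD_cons_succ]
        rw [adjCount_cons_cons]
        have hb : b ∉ M' := (List.nodup_cons.1 (List.nodup_cons.1 hnd).2).1
        rw [adjCount_eq_zero_right (M := b :: M') _ (by simpa using hb), zero_add]
        simp only [Prod.mk.injEq, and_true]
        by_cases hya : y = a
        · subst hya; simp
        · simp [hya, Ne.symm hya]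
      | succ i =>
        rw [List.getD_cons_succ, adjCount_cons_cons]
        have hlen : i + 1 < (b :: M').length := by
          simpa [List.length_cons] using Nat.lt_of_succ_lt_succ h
        have hnd' : (b :: M').Nodup := (List.nodup_cons.1 hnd).2
        have hxb : (b :: M').getD (i + 1) d ≠ b := by
          rw [List.getD_eq_getElem _ _ hlen]
          have heq : (b :: M')[i + 1] = (b :: M')[0] ↔ i + 1 = 0 :=
            hnd'.getElem_inj_iff
          intro hh
          have : i + 1 = 0 := heq.1 (by simpa using hh)
          omega
        have hneg : ¬((a, b) = (y, (b :: M').getD (i + 1) d)) := fun hh =>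
          hxb (Prod.ext_iff.1 hh).2.symm
        rw [if_neg hneg, add_zero, ih hnd' i hlen y]
        simp only [List.getD_cons_succ]

lemma getD_reverse' {α : Type} (L : List α) (n : ℕ) (h : n < L.length) (d : α) :
    L.reverse.getD n d = L.getD (L.length - 1 - n) d := by
  rw [List.getD_eq_getElem _ _ (by simpa using h),
    List.getD_eq_getElem _ _ (by omega), List.getElem_reverse]

/-- The full vertex list of the path replacing the `j`-th edge from `u` to `v`. -/
def chainL {G H : Multigraph} (S : Subdivision G H) {u v : G.V} (j : Fin (G.m u v)) :
    List H.V :=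
  S.emb u :: (S.path u v j ++ [S.emb v])

/-- The `n`-th vertex along the chain. -/
def qv {G H : Multigraph} (S : Subdivision G H) {u v : G.V} (j : Fin (G.m u v)) (n : ℕ) :
    H.V :=
  (chainL S j).getD n (S.emb u)

section Chain

variable {G H : Multigraph} (S : Subdivision G H) {u v : G.V} (j : Fin (G.m u v))

lemma chain_ne' {G : Multigraph} {u v : G.V} (j : Fin (G.m u v)) : u ≠ v := by
  intro h
  subst h
  have h2 : (j : ℕ) < G.m u u := j.isLt
  have h3 := G.loopless u
  omega

lemma chainL_length : (chainL S j).length = (S.path u v j).length + 2 := by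
  simp [chainL]

lemma chainL_nodup : (chainL S j).Nodup := by
  have hne : S.emb u ≠ S.emb v := fun h => chain_ne' j (S.inj h)
  have hu : S.emb u ∉ S.path u v j := fun h => S.fresh u v j _ h ⟨u, rfl⟩
  have hv : S.emb v ∉ S.path u v j := fun h => S.fresh u v j _ h ⟨v, rfl⟩
  unfold chainL
  rw [List.nodup_cons, List.mem_append]
  refine ⟨fun h => ?_, ?_⟩
  · rcases h with h | h
    · exact hu h
    · exact hne (by simpa using h)
  · rw [List.nodup_append]
    exact ⟨S.nodup u v j, List.nodup_singleton _,
      fun x hx y hy hxy => hv (by rwa [hxy, List.mem_singleton.1 hy] at hx)⟩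

lemma chainL_rev : chainL S (Fin.cast (G.symm u v) j) = (chainL S j).reverse := by
  simp [chainL, S.rev u v j]

lemma qv_zero : qv S j 0 = S.emb u := rfl

lemma qv_last : qv S j ((S.path u v j).length + 1) = S.emb v := by
  unfold qv chainL
  rw [List.getD_cons_succ, List.getD_eq_getElem _ _ (by simp),
    List.getElem_append_right (by simp)]
  simp

lemma qv_mem_path {l : ℕ} (h1 : 1 ≤ l) (h2 : l ≤ (S.path u v j).length) :
    qv S j l ∈ S.path u v j := by
  obtain ⟨n, rfl⟩ : ∃ n, l = n + 1 := ⟨l - 1, by omega⟩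
  unfold qv chainL
  rw [List.getD_cons_succ, List.getD_eq_getElem _ _ (by simp; omega),
    List.getElem_append_left (by omega)]
  exact List.getElem_mem _

lemma qv_inj {i i' : ℕ} (hi : i ≤ (S.path u v j).length + 1)
    (hi' : i' ≤ (S.path u v j).length + 1) (hne : i ≠ i') : qv S j i ≠ qv S j i' := by
  have hlen := chainL_length S j
  unfold qv
  rw [List.getD_eq_getElem _ _ (by omega), List.getD_eq_getElem _ _ (by omega)]
  rw [Ne, (chainL_nodup S j).getElem_inj_iff]
  exact hne

lemma triple_sum_ite {G : Multigraph} {β : Type} [AddCommMonoid β] (u v : G.V)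
    (j : Fin (G.m u v)) (c : β) :
    (∑ u' : G.V, ∑ v' : G.V, ∑ j' : Fin (G.m u' v'),
      if u' = u ∧ v' = v ∧ (j' : ℕ) = (j : ℕ) then c else 0) = c := by
  rw [Finset.sum_eq_single_of_mem u (Finset.mem_univ u)]
  · rw [Finset.sum_eq_single_of_mem v (Finset.mem_univ v)]
    · rw [Finset.sum_eq_single_of_mem j (Finset.mem_univ j)]
      · simp
      · exact fun j' _ hj' => if_neg (fun hc => hj' (Fin.ext hc.2.2))
    · exact fun v' _ hv' => Finset.sum_eq_zero fun j' _ => if_neg (fun hc => hv' hc.2.1)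
  · exact fun u' _ hu' => Finset.sum_eq_zero fun v' _ =>
      Finset.sum_eq_zero fun j' _ => if_neg (fun hc => hu' hc.1)

lemma m_eq_adjCount {x : H.V} (hx : x ∈ S.path u v j) (y : H.V) :
    H.m x y = adjCount x y (chainL S j) + adjCount x y (chainL S j).reverse := by
  have hterm : ∀ u' v' (j' : Fin (G.m u' v')),
      adjCount x y (S.emb u' :: (S.path u' v' j' ++ [S.emb v'])) =
        (if u' = u ∧ v' = v ∧ (j' : ℕ) = (j : ℕ)
          then adjCount x y (chainL S j) else 0) +
        (if u' = v ∧ v' = u ∧ (j' : ℕ) = (j : ℕ)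
          then adjCount x y (chainL S j).reverse else 0) := by
    intro u' v' j'
    by_cases h1 : u' = u ∧ v' = v ∧ (j' : ℕ) = (j : ℕ)
    · obtain ⟨rfl, rfl, hj⟩ := h1
      have : j' = j := Fin.ext hj
      subst this
      rw [if_pos ⟨rfl, rfl, rfl⟩, if_neg (fun hc => chain_ne' j' hc.1), add_zero]
      rfl
    · rw [if_neg h1]
      by_cases h2 : u' = v ∧ v' = u ∧ (j' : ℕ) = (j : ℕ)
      · obtain ⟨rfl, rfl, hj⟩ := h2
        have : j' = Fin.cast (G.symm v' u') j := Fin.ext (by simpa using hj)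
        subst this
        rw [if_pos ⟨rfl, rfl, by simp⟩, zero_add]
        exact congrArg (adjCount x y) (chainL_rev S j)
      · rw [if_neg h2, add_zero]
        apply adjCount_eq_zero_left
        intro hmem
        rcases List.mem_cons.1 hmem with h | h
        · exact S.fresh u v j _ hx ⟨u', h.symm⟩
        · rcases List.mem_append.1 h with h' | h'
          · rcases S.disj u v j u' v' j' _ hx h' with ⟨e1, e2, e3⟩ | ⟨e1, e2, e3⟩
            · exact h1 ⟨e1.symm, e2.symm, e3.symm⟩
            · exact h2 ⟨e2.symm, e1.symm, e3.symm⟩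
          · exact S.fresh u v j _ hx ⟨v', (List.mem_singleton.1 h').symm⟩
  rw [S.edges x y]
  rw [Finset.sum_congr rfl fun u' _ => Finset.sum_congr rfl fun v' _ =>
    Finset.sum_congr rfl fun j' _ => hterm u' v' j']
  simp only [Finset.sum_add_distrib]
  have h2 := triple_sum_ite (G := G) v u (Fin.cast (G.symm u v) j)
    (adjCount x y (chainL S j).reverse)
  simp only [Fin.coe_cast] at h2
  rw [triple_sum_ite, h2]

lemma chain_m {l : ℕ} (h1 : 1 ≤ l) (h2 : l ≤ (S.path u v j).length) (y : H.V) :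
    H.m (qv S j l) y =
      (if y = qv S j (l - 1) then 1 else 0) + (if y = qv S j (l + 1) then 1 else 0) := by
  have hlen := chainL_length S j
  have hnd := chainL_nodup S j
  have hx : qv S j l ∈ S.path u v j := qv_mem_path S j h1 h2
  rw [m_eq_adjCount S j hx y]
  have hleft : adjCount (qv S j l) y (chainL S j) = if y = qv S j (l + 1) then 1 else 0 :=
    adjCount_getD_left (S.emb u) (chainL S j) hnd l (by omega) y
  have hrev : qv S j l
      = (chainL S j).reverse.getD ((S.path u v j).length + 1 - l) (S.emb u) := by
    rw [getD_reverse' _ _ (by omega) _]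
    unfold qv
    congr 1
    omega
  have hidx : (chainL S j).reverse.getD ((S.path u v j).length + 1 - l + 1) (S.emb u)
      = qv S j (l - 1) := by
    rw [getD_reverse' _ _ (by omega) _]
    unfold qv
    congr 1
    omega
  have hright : adjCount (qv S j l) y (chainL S j).reverse
      = if y = qv S j (l - 1) then 1 else 0 := by
    rw [hrev, adjCount_getD_left (S.emb u) (chainL S j).reverse
      (List.nodup_reverse.2 hnd) _ (by rw [List.length_reverse]; omega) y, hidx]
  rw [hleft, hright]
  exact Nat.add_comm _ _

end Chain

namespace Multigraph

variable {G : Multigraph}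

lemma mlap_min_eq (f : G.V → ℤ) (c : ℤ) (w : G.V) (hw : c ≤ f w) :
    G.mlap (fun z => min (f z) c) w = ∑ u, (G.m w u : ℤ) * (c - min (f u) c) := by
  unfold mlap
  refine Finset.sum_congr rfl fun u _ => ?_
  simp only [min_eq_right hw]

lemma mlap_min_nonneg (f : G.V → ℤ) (c : ℤ) (w : G.V) (hw : c ≤ f w) :
    0 ≤ G.mlap (fun z => min (f z) c) w := by
  rw [mlap_min_eq f c w hw]
  refine Finset.sum_nonneg fun u _ => mul_nonneg (by positivity) ?_
  have := min_le_right (f u) c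
  omega

lemma mlap_min_one (f : G.V → ℤ) (c : ℤ) (w u0 : G.V) (hw : c ≤ f w)
    (hu0 : f u0 < c) (hm : 1 ≤ G.m w u0) :
    1 ≤ G.mlap (fun z => min (f z) c) w := by
  rw [mlap_min_eq f c w hw]
  have hterm : 1 ≤ (G.m w u0 : ℤ) * (c - min (f u0) c) := by
    have h1 : (1 : ℤ) ≤ (G.m w u0 : ℤ) := by exact_mod_cast hm
    have h2 : min (f u0) c = f u0 := min_eq_left (le_of_lt hu0)
    nlinarith
  refine le_trans hterm (Finset.single_le_sum
    (f := fun u => (G.m w u : ℤ) * (c - min (f u) c)) (fun u _ => ?_) (Finset.mem_univ u0))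
  refine mul_nonneg (by positivity) ?_
  have := min_le_right (f u) c
  omega

lemma mlap_min_sub (f : G.V → ℤ) (c : ℤ) (w : G.V) (hw : f w ≤ c) :
    G.mlap (fun z => min (f z) c) w - G.mlap f w
      = ∑ u, (G.m w u : ℤ) * (f u - min (f u) c) := by
  unfold mlap
  rw [← Finset.sum_sub_distrib]
  refine Finset.sum_congr rfl fun u _ => ?_
  simp only [min_eq_left hw]
  ring

lemma mlap_min_ge_mlap (f : G.V → ℤ) (c : ℤ) (w : G.V) (hw : f w ≤ c) :
    G.mlap f w ≤ G.mlap (fun z => min (f z) c) w := by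
  have h := mlap_min_sub f c w hw
  have h2 : 0 ≤ ∑ u, (G.m w u : ℤ) * (f u - min (f u) c) := by
    refine Finset.sum_nonneg fun u _ => mul_nonneg (by positivity) ?_
    have := min_le_left (f u) c
    omega
  omega

lemma mlap_min_sub_one (f : G.V → ℤ) (c : ℤ) (w u0 : G.V) (hw : f w ≤ c)
    (hu0 : c < f u0) (hm : 1 ≤ G.m w u0) :
    G.mlap f w + 1 ≤ G.mlap (fun z => min (f z) c) w := by
  have h := mlap_min_sub f c w hw
  have hterm : 1 ≤ (G.m w u0 : ℤ) * (f u0 - min (f u0) c) := by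
    have h1 : (1 : ℤ) ≤ (G.m w u0 : ℤ) := by exact_mod_cast hm
    have h2 : min (f u0) c = c := min_eq_right (le_of_lt hu0)
    nlinarith
  have h2 : 1 ≤ ∑ u, (G.m w u : ℤ) * (f u - min (f u) c) := by
    refine le_trans hterm (Finset.single_le_sum
      (f := fun u => (G.m w u : ℤ) * (f u - min (f u) c)) (fun u _ => ?_) (Finset.mem_univ u0))
    refine mul_nonneg (by positivity) ?_
    have := min_le_left (f u) c
    omega
  omega

end Multigraph

section Move

variable {G H : Multigraph} (S : Subdivision G H) {u v : G.V} (j : Fin (G.m u v))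

lemma qv_path_get {n : ℕ} (hn : n < (S.path u v j).length) :
    qv S j (n + 1) = (S.path u v j)[n] := by
  unfold qv chainL
  rw [List.getD_cons_succ, List.getD_eq_getElem _ _ (by simp; omega),
    List.getElem_append_left (by omega)]

/-- moving chips inward along an internal segment of the chain -/
lemma chain_move (D : H.Divisor) (t : ℕ) (ht1 : 1 ≤ t) (ht2 : t ≤ (S.path u v j).length) :
    ∀ d i jj (X : H.Divisor), H.Effective X → H.DEquiv D X →
      i ≤ t → t ≤ jj → jj ≤ (S.path u v j).length + 1 → jj - i ≤ d →
      1 ≤ X (qv S j i) → 1 ≤ X (qv S j jj) →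
      ∃ X', H.Effective X' ∧ H.DEquiv D X' ∧ 1 ≤ X' (qv S j t) := by
  intro d
  induction d with
  | zero =>
    intro i jj X hX hDX hit htj hjlen hd hXi hXj
    have hti : t = i := by omega
    exact ⟨X, hX, hDX, hti ▸ hXi⟩
  | succ d ih =>
    intro i jj X hX hDX hit htj hjlen hd hXi hXj
    by_cases hti : t = i
    · exact ⟨X, hX, hDX, hti ▸ hXi⟩
    by_cases htjj : t = jj
    · exact ⟨X, hX, hDX, htjj ▸ hXj⟩
    have hit' : i < t := by omega
    have htj2 : t < jj := by omega
    classical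
    set B : Finset H.V := (Finset.Ioo i jj).image (qv S j) with hB
    have hqB : ∀ n, n ≤ (S.path u v j).length + 1 → (qv S j n ∈ B ↔ i < n ∧ n < jj) := by
      intro n hn
      constructor
      · intro hmem
        rw [hB, Finset.mem_image] at hmem
        obtain ⟨l, hl, hql⟩ := hmem
        rw [Finset.mem_Ioo] at hl
        have hln : l = n := by
          by_contra hne
          exact qv_inj S j (by omega) hn hne hql
        omega
      · intro hn'
        rw [hB, Finset.mem_image]
        exact ⟨n, Finset.mem_Ioo.2 ⟨hn'.1, hn'.2⟩, rfl⟩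
    set x : H.V → ℤ := fun z => if z ∈ B then 1 else 0 with hx
    have hx01 : ∀ z, 0 ≤ x z ∧ x z ≤ 1 := by
      intro z; rw [hx]; dsimp only; split <;> omega
    have hxB : ∀ z, z ∈ B → x z = 1 := by intro z hz; rw [hx]; simp [hz]
    have hxnB : ∀ z, z ∉ B → x z = 0 := by intro z hz; rw [hx]; simp [hz]
    have hm1 : ∀ l, 1 ≤ l → l ≤ (S.path u v j).length →
        (H.m (qv S j l) (qv S j (l - 1)) = 1 ∧ H.m (qv S j l) (qv S j (l + 1)) = 1) := by
      intro l h1 h2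
      constructor
      · rw [chain_m S j h1 h2]
        rw [if_pos rfl, if_neg (qv_inj S j (by omega) (by omega) (by omega))]
      · rw [chain_m S j h1 h2]
        rw [if_neg (qv_inj S j (by omega) (by omega) (by omega)), if_pos rfl]
    have hsum : ∀ z, z ∉ B → (∑ u', (H.m z u' : ℤ) * x u')
        = (if z = qv S j i then 1 else 0) + (if z = qv S j jj then 1 else 0) := by
      intro z hz
      have h1 : (∑ u', (H.m z u' : ℤ) * x u') = ∑ u' ∈ B, (H.m z u' : ℤ) := by
        rw [hx]
        simp only [mul_ite, mul_one, mul_zero]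
        rw [Finset.sum_ite_mem, Finset.univ_inter]
      rw [h1, hB, Finset.sum_image (fun a ha b hb hab => by
        rw [Finset.mem_coe, Finset.mem_Ioo] at ha hb
        by_contra hne
        exact qv_inj S j (by omega) (by omega) hne hab)]
      have h2 : ∀ l ∈ Finset.Ioo i jj, (H.m z (qv S j l) : ℤ)
          = (if l = i + 1 then (if z = qv S j i then (1:ℤ) else 0) else 0)
            + (if l = jj - 1 then (if z = qv S j jj then (1:ℤ) else 0) else 0) := by
        intro l hl
        rw [Finset.mem_Ioo] at hl
        rw [H.symm, chain_m S j (by omega) (by omega) z]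
        push_cast
        congr 1
        · by_cases hli : l = i + 1
          · subst hli
            simp [Nat.add_sub_cancel]
          · rw [if_neg hli, if_neg]
            intro hzq
            exact hz (hzq ▸ (hqB (l - 1) (by omega)).2 ⟨by omega, by omega⟩)
        · by_cases hlj : l = jj - 1
          · subst hlj
            rw [show jj - 1 + 1 = jj from by omega]
            simp
          · rw [if_neg hlj, if_neg]
            intro hzq
            exact hz (hzq ▸ (hqB (l + 1) (by omega)).2 ⟨by omega, by omega⟩)
      rw [Finset.sum_congr rfl h2, Finset.sum_add_distrib,
        Finset.sum_ite_eq' (Finset.Ioo i jj) (i + 1) (fun _ => if z = qv S j i then (1:ℤ) else 0),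
        Finset.sum_ite_eq' (Finset.Ioo i jj) (jj - 1) (fun _ => if z = qv S j jj then (1:ℤ) else 0),
        if_pos (Finset.mem_Ioo.2 ⟨by omega, by omega⟩),
        if_pos (Finset.mem_Ioo.2 ⟨by omega, by omega⟩)]
    have hmlap_nB : ∀ z, z ∉ B → H.mlap x z
        = -((if z = qv S j i then 1 else 0) + (if z = qv S j jj then 1 else 0)) := by
      intro z hz
      have h0 : H.mlap x z = -(∑ u', (H.m z u' : ℤ) * x u') := by
        unfold Multigraph.mlap
        rw [← Finset.sum_neg_distrib]
        refine Finset.sum_congr rfl fun u' _ => ?_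
        rw [hxnB z hz]
        ring
      rw [h0, hsum z hz]
    have hmlap_B : ∀ z, z ∈ B → 0 ≤ H.mlap x z := by
      intro z hz
      refine Finset.sum_nonneg fun u' _ => mul_nonneg (by positivity) ?_
      rw [hxB z hz]
      have := (hx01 u').2
      omega
    have hiB : qv S j i ∉ B := fun hmem => by
      have := (hqB i (by omega)).1 hmem
      omega
    have hjjB : qv S j jj ∉ B := fun hmem => by
      have := (hqB jj (by omega)).1 hmem
      omega
    have hchip1 : 1 ≤ H.mlap x (qv S j (i + 1)) := by
      have hq1B : qv S j (i + 1) ∈ B := (hqB (i + 1) (by omega)).2 ⟨by omega, by omega⟩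
      have hm := (hm1 (i + 1) (by omega) (by omega)).1
      simp only [Nat.add_sub_cancel] at hm
      have hterm : (1:ℤ) ≤ (H.m (qv S j (i + 1)) (qv S j i) : ℤ)
          * (x (qv S j (i + 1)) - x (qv S j i)) := by
        rw [hm, hxB _ hq1B, hxnB _ hiB]
        norm_num
      refine le_trans hterm (Finset.single_le_sum
        (f := fun u' => (H.m (qv S j (i + 1)) u' : ℤ) * (x (qv S j (i + 1)) - x u'))
        (fun u' _ => mul_nonneg (by positivity) ?_) (Finset.mem_univ (qv S j i)))
      rw [hxB _ hq1B]
      have := (hx01 u').2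
      omega
    have hchip2 : 1 ≤ H.mlap x (qv S j (jj - 1)) := by
      have hq1B : qv S j (jj - 1) ∈ B := (hqB (jj - 1) (by omega)).2 ⟨by omega, by omega⟩
      have hm := (hm1 (jj - 1) (by omega) (by omega)).2
      rw [show jj - 1 + 1 = jj from by omega] at hm
      have hterm : (1:ℤ) ≤ (H.m (qv S j (jj - 1)) (qv S j jj) : ℤ)
          * (x (qv S j (jj - 1)) - x (qv S j jj)) := by
        rw [hm, hxB _ hq1B, hxnB _ hjjB]
        norm_num
      refine le_trans hterm (Finset.single_le_sum
        (f := fun u' => (H.m (qv S j (jj - 1)) u' : ℤ) * (x (qv S j (jj - 1)) - x u'))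
        (fun u' _ => mul_nonneg (by positivity) ?_) (Finset.mem_univ (qv S j jj)))
      rw [hxB _ hq1B]
      have := (hx01 u').2
      omega
    have hXeff' : H.Effective (fun z => X z + H.mlap x z) := by
      intro z
      show 0 ≤ X z + H.mlap x z
      by_cases hzB : z ∈ B
      · have h1 := hmlap_B z hzB
        have h2 := hX z
        omega
      · have h1 := hmlap_nB z hzB
        rw [h1]
        by_cases hzi : z = qv S j i
        · have hzjj : z ≠ qv S j jj := by
            subst hzi
            exact qv_inj S j (by omega) (by omega) (by omega)
          rw [if_pos hzi, if_neg hzjj]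
          rw [hzi]
          omega
        · by_cases hzjj : z = qv S j jj
          · rw [if_neg hzi, if_pos hzjj, hzjj]
            omega
          · rw [if_neg hzi, if_neg hzjj]
            have := hX z
            omega
    have hDX' : H.DEquiv D (fun z => X z + H.mlap x z) := by
      obtain ⟨g, hg⟩ := hDX
      refine Multigraph.dequiv_of_mlap (fun z => g z - x z) fun z => ?_
      have hms := Multigraph.mlap_sub_apply g x z
      have hgz : D z - X z = H.mlap g z := hg z
      show D z - (X z + H.mlap x z) = H.mlap (fun z => g z - x z) z
      rw [hms]
      omega
    have hXi' : 1 ≤ X (qv S j (i + 1)) + H.mlap x (qv S j (i + 1)) := by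
      have := hX (qv S j (i + 1))
      omega
    have hXj' : 1 ≤ X (qv S j (jj - 1)) + H.mlap x (qv S j (jj - 1)) := by
      have := hX (qv S j (jj - 1))
      omega
    exact ih (i + 1) (jj - 1) (fun z => X z + H.mlap x z) hXeff' hDX'
      (by omega) (by omega) (by omega) (by omega) hXi' hXj'

/-- A divisor reaching both branch ends of a subdivided edge reaches its interior. -/
lemma reaches_internal (D : H.Divisor) {w : H.V} (hw : w ∈ S.path u v j)
    (hu : H.Reaches D (S.emb u)) (hv : H.Reaches D (S.emb v)) : H.Reaches D w := by
  classical
  obtain ⟨E1, hE1eff, hDE1, hE1u⟩ := hu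
  obtain ⟨E2, hE2eff, hDE2, hE2v⟩ := hv
  obtain ⟨g1, hg1⟩ := hDE1
  obtain ⟨g2, hg2⟩ := hDE2
  set f : H.V → ℤ := fun z => g1 z - g2 z with hf
  have h12 : ∀ z, E2 z = E1 z + H.mlap f z := by
    intro z
    have h1 : D z - E1 z = H.mlap g1 z := hg1 z
    have h2 : D z - E2 z = H.mlap g2 z := hg2 z
    have h3 : H.mlap f z = H.mlap g1 z - H.mlap g2 z :=
      Multigraph.mlap_sub_apply g1 g2 z
    omega
  obtain ⟨n, hn, hnw⟩ := List.mem_iff_getElem.1 hw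
  have hqt : qv S j (n + 1) = w := by rw [qv_path_get S j hn, hnw]
  set t := n + 1 with ht
  have ht1 : 1 ≤ t := by omega
  have ht2 : t ≤ (S.path u v j).length := by omega
  set c := f (qv S j t) with hc
  set Q : ℕ → Prop := fun a => a ≤ t ∧ ∀ l, a ≤ l → l ≤ t → f (qv S j l) = c with hQ
  have hQt : Q t := ⟨le_refl t, fun l h1 h2 => by rw [show l = t from by omega]⟩
  have hex : ∃ a, Q a := ⟨t, hQt⟩
  set a := Nat.find hex with ha
  have hQa : Q a := Nat.find_spec hex
  have hamin : ∀ m, m < a → ¬Q m := fun m hm => Nat.find_min hex hm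
  have hat : a ≤ t := hQa.1
  set R : ℕ → Prop := fun b => t ≤ b ∧ ∀ l, t ≤ l → l ≤ b → f (qv S j l) = c with hR
  have hRt : R t := ⟨le_refl t, fun l h1 h2 => by rw [show l = t from by omega]⟩
  set b := Nat.findGreatest R ((S.path u v j).length + 1) with hb
  have hRb : R b := Nat.findGreatest_spec (by omega) hRt
  have hble : b ≤ (S.path u v j).length + 1 := Nat.findGreatest_le _
  have htb : t ≤ b := hRb.1
  set Dc : H.Divisor := fun z => E1 z + H.mlap (fun z' => min (f z') c) z with hDc
  have hDcE2 : ∀ z, f z ≤ c → E2 z ≤ Dc z := by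
    intro z hz
    have h1 := Multigraph.mlap_min_ge_mlap f c z hz
    have h2 := h12 z
    show E2 z ≤ E1 z + H.mlap (fun z' => min (f z') c) z
    omega
  have hDcE1 : ∀ z, c ≤ f z → E1 z ≤ Dc z := by
    intro z hz
    have h1 := Multigraph.mlap_min_nonneg f c z hz
    show E1 z ≤ E1 z + H.mlap (fun z' => min (f z') c) z
    omega
  have hDceff : H.Effective Dc := by
    intro z
    rcases le_total (f z) c with h | h
    · have h1 := hDcE2 z h
      have h2 := hE2eff z
      omega
    · have h1 := hDcE1 z h
      have h2 := hE1eff z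
      omega
  have hDDc : H.DEquiv D Dc := by
    refine Multigraph.dequiv_of_mlap (fun z => g1 z - min (f z) c) fun z => ?_
    have key : H.mlap (fun z => g1 z - min (f z) c) z
        = H.mlap g1 z - H.mlap (fun z' => min (f z') c) z :=
      Multigraph.mlap_sub_apply g1 (fun z' => min (f z') c) z
    have h1 : D z - E1 z = H.mlap g1 z := hg1 z
    show D z - (E1 z + H.mlap (fun z' => min (f z') c) z)
        = H.mlap (fun z => g1 z - min (f z) c) z
    rw [key]
    omega
  have hfa : f (qv S j a) = c := hQa.2 a (le_refl a) hat
  have hchipa : 1 ≤ Dc (qv S j a) := by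
    rcases Nat.eq_zero_or_pos a with ha0 | hapos
    · have h1 : E1 (qv S j a) ≤ Dc (qv S j a) := hDcE1 _ (le_of_eq hfa.symm)
      have h2 : qv S j a = S.emb u := by rw [ha0]; rfl
      rw [h2] at h1 ⊢
      omega
    · have hfa1 : f (qv S j (a - 1)) ≠ c := by
        intro heq
        apply hamin (a - 1) (by omega)
        refine ⟨by omega, fun l h1 h2 => ?_⟩
        rcases Nat.eq_or_lt_of_le h1 with h | h
        · rw [← h]; exact heq
        · exact hQa.2 l (by omega) h2
      have hm : 1 ≤ H.m (qv S j a) (qv S j (a - 1)) := by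
        rw [chain_m S j (by omega) (by omega)]
        rw [if_pos rfl, if_neg (qv_inj S j (by omega) (by omega) (by omega))]
      rcases lt_or_gt_of_ne hfa1 with hlt | hgt
      · have h1 := Multigraph.mlap_min_one f c (qv S j a) (qv S j (a - 1))
          (le_of_eq hfa.symm) hlt hm
        have h2 := hE1eff (qv S j a)
        show 1 ≤ E1 (qv S j a) + H.mlap (fun z' => min (f z') c) (qv S j a)
        omega
      · have h1 := Multigraph.mlap_min_sub_one f c (qv S j a) (qv S j (a - 1))
          (le_of_eq hfa) hgt hm
        have h2 := h12 (qv S j a)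
        have h3 := hE2eff (qv S j a)
        show 1 ≤ E1 (qv S j a) + H.mlap (fun z' => min (f z') c) (qv S j a)
        omega
  have hfb : f (qv S j b) = c := hRb.2 b htb (le_refl b)
  have hchipb : 1 ≤ Dc (qv S j b) := by
    rcases Nat.lt_or_ge b ((S.path u v j).length + 1) with hblt | hbeq
    · have hnR : ¬ R (b + 1) :=
        Nat.findGreatest_is_greatest (n := (S.path u v j).length + 1)
          (by omega) (by omega)
      have hfb1 : f (qv S j (b + 1)) ≠ c := by
        intro heq
        refine hnR ⟨by omega, fun l h1 h2 => ?_⟩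
        rcases Nat.eq_or_lt_of_le h2 with h | h
        · rw [h]; exact heq
        · exact hRb.2 l h1 (by omega)
      have hm : 1 ≤ H.m (qv S j b) (qv S j (b + 1)) := by
        rw [chain_m S j (by omega) (by omega)]
        rw [if_neg (qv_inj S j (by omega) (by omega) (by omega)), if_pos rfl]
      rcases lt_or_gt_of_ne hfb1 with hlt | hgt
      · have h1 := Multigraph.mlap_min_one f c (qv S j b) (qv S j (b + 1))
          (le_of_eq hfb.symm) hlt hm
        have h2 := hE1eff (qv S j b)
        show 1 ≤ E1 (qv S j b) + H.mlap (fun z' => min (f z') c) (qv S j b)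
        omega
      · have h1 := Multigraph.mlap_min_sub_one f c (qv S j b) (qv S j (b + 1))
          (le_of_eq hfb) hgt hm
        have h2 := h12 (qv S j b)
        have h3 := hE2eff (qv S j b)
        show 1 ≤ E1 (qv S j b) + H.mlap (fun z' => min (f z') c) (qv S j b)
        omega
    · have hbv : b = (S.path u v j).length + 1 := by omega
      have h1 : E2 (qv S j b) ≤ Dc (qv S j b) := hDcE2 _ (le_of_eq hfb)
      have h2 : qv S j b = S.emb v := by rw [hbv]; exact qv_last S j
      rw [h2] at h1 ⊢
      omega
  obtain ⟨X', hX'eff, hDX', hX't⟩ := chain_move S j D t ht1 ht2 (b - a) a b Dc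
    hDceff hDDc hat htb hble (by omega) hchipa hchipb
  exact ⟨X', hX'eff, hDX', by rw [← hqt]; omega⟩

end Move

end Aux

/-- If `H` is a subdivision of the connected loopless multigraph `G` and the
divisor `D` on `H` reaches every vertex of `H` coming from a vertex of `G`, then
`rank D ≥ 1`. -/
theorem rank_ge_one_of_reaches_branch_vertices
    (G : Multigraph) (hG : G.Connected) (H : Multigraph) (S : Subdivision G H)
    (D : H.Divisor) (hreach : ∀ u : G.V, H.Reaches D (S.emb u)) :
    1 ≤ H.rank D := by
  classical
  obtain ⟨hGne, -⟩ := hG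
  obtain ⟨u0⟩ := hGne
  have hall : ∀ w : H.V, H.Reaches D w := by
    intro w
    rcases S.cover w with ⟨u, rfl⟩ | ⟨u, v, j, hw⟩
    · exact hreach u
    · exact reaches_internal S j D hw (hreach u) (hreach v)
  obtain ⟨D0, hD0eff, hDD0, -⟩ := hall (S.emb u0)
  have hdegnn : 0 ≤ H.deg D := by
    rw [Multigraph.dequiv_deg_eq hDD0]
    exact Finset.sum_nonneg fun z _ => hD0eff z
  have hrge0 : H.RankGe D 0 := by
    intro E hEeff hEdeg
    have hE0 : ∀ z, E z = 0 := by
      have hs : ∀ z ∈ Finset.univ, E z = 0 :=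
        (Finset.sum_eq_zero_iff_of_nonneg (fun z _ => hEeff z)).1 (by exact_mod_cast hEdeg)
      exact fun z => hs z (Finset.mem_univ z)
    refine ⟨D0, hD0eff, ?_⟩
    obtain ⟨g, hg⟩ := hDD0
    refine ⟨g, fun z => ?_⟩
    have h1 : D z - D0 z = ∑ u', (H.m z u' : ℤ) * (g z - g u') := hg z
    show D z - E z - D0 z = ∑ u', (H.m z u' : ℤ) * (g z - g u')
    have h2 := hE0 z
    omega
  have hrge1 : H.RankGe D 1 := by
    intro E hEeff hEdeg
    have hdeg1 : ∑ z, E z = 1 := by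
      have : H.deg E = 1 := by exact_mod_cast hEdeg
      exact this
    have hex : ∃ w, 0 < E w := by
      by_contra hno
      push_neg at hno
      have h1 : ∑ z, E z ≤ 0 := Finset.sum_nonpos fun z _ => hno z
      omega
    obtain ⟨w, hw⟩ := hex
    obtain ⟨D', hD'eff, hDD', hD'w⟩ := hall w
    have hEz : ∀ z, z ≠ w → E z = 0 := by
      intro z hz
      have hsplit := Finset.sum_erase_add Finset.univ E (Finset.mem_univ z)
      have hw' : E w ≤ ∑ t ∈ Finset.univ.erase z, E t :=
        Finset.single_le_sum (fun i _ => hEeff i)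
          (Finset.mem_erase.2 ⟨Ne.symm hz, Finset.mem_univ w⟩)
      have := hEeff z
      omega
    have hEw : E w ≤ 1 := by
      have hsplit := Finset.sum_erase_add Finset.univ E (Finset.mem_univ w)
      have h1 : 0 ≤ ∑ t ∈ Finset.univ.erase w, E t :=
        Finset.sum_nonneg fun i _ => hEeff i
      omega
    refine ⟨fun z => D' z - E z, fun z => ?_, ?_⟩
    · show 0 ≤ D' z - E z
      by_cases hzw : z = w
      · subst hzw
        omega
      · have h1 := hEz z hzw
        have h2 := hD'eff z
        omega
    · obtain ⟨g, hg⟩ := hDD'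
      refine ⟨g, fun z => ?_⟩
      have h1 : D z - D' z = ∑ u', (H.m z u' : ℤ) * (g z - g u') := hg z
      show D z - E z - (D' z - E z) = ∑ u', (H.m z u' : ℤ) * (g z - g u')
      omega
  have hbdd : BddAbove {k : ℕ | H.RankGe D k} := by
    refine ⟨(H.deg D).toNat, fun k hk => ?_⟩
    by_contra hgt
    push_neg at hgt
    have h1 : ((H.deg D).toNat : ℤ) = H.deg D := Int.toNat_of_nonneg hdegnn
    obtain ⟨F, hFeff, hFequiv⟩ := hk (fun z => if z = S.emb u0 then (k:ℤ) else 0)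
      (fun z => by
        by_cases h : z = S.emb u0
        · simp [h]
        · simp [h])
      (by
        show (∑ z, if z = S.emb u0 then (k:ℤ) else 0) = (k:ℤ)
        rw [Finset.sum_ite_eq' Finset.univ (S.emb u0) (fun _ => (k:ℤ))]
        simp)
    have hdegF := Multigraph.dequiv_deg_eq hFequiv
    have hFnn : 0 ≤ H.deg F := Finset.sum_nonneg fun z _ => hFeff z
    have h2 : H.deg (fun z => D z - if z = S.emb u0 then (k:ℤ) else 0)
        = H.deg D - k := by
      show (∑ z, (D z - if z = S.emb u0 then (k:ℤ) else 0)) = (∑ z, D z) - k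
      rw [Finset.sum_sub_distrib,
        Finset.sum_ite_eq' Finset.univ (S.emb u0) (fun _ => (k:ℤ))]
      simp
    omega
  have hmem : 1 ∈ {k : ℕ | H.RankGe D k} := hrge1
  have h1 : 1 ≤ sSup {k : ℕ | H.RankGe D k} := le_csSup hbdd hmem
  unfold Multigraph.rank
  rw [if_pos hrge0]
  exact_mod_cast h1
end

section
/- Let G be a connected loopless multigraph, let v₀ ∈ V(G), and let e₁,…,e_k be the edges of G incident with v₀ (listed with multiplicity), where e_i joins v₀ to a vertex v_i ≠ v₀. Let H be a subdivision of G, let D be a v₀-reduced divisor on H of rank at least 1, let w ∈ V(H) be a vertex with D(w) = 0, and let A be the maximal valid subset of V(H) ∖ {w} with respect to D (the set of unburned vertices of Dhar's burning algorithm run on (H, D, w)). Then v₀ ∈ A. -/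
lemma rankGe_of_succ (H : Multigraph) (D : H.Divisor) (w : H.V) {k : ℕ}
    (h : H.RankGe D (k + 1)) : H.RankGe D k := by
  intro E hE hdeg
  obtain ⟨F, hF, hFeq⟩ := h (fun v => E v + if v = w then 1 else 0)
    (fun v => by have := hE v; positivity)
    (by
      simp only [Multigraph.deg, Finset.sum_add_distrib,
        Finset.sum_ite_eq' Finset.univ w (fun _ => (1 : ℤ)),
        Finset.mem_univ, if_true]
      unfold Multigraph.deg at hdeg
      rw [hdeg]; push_cast; ring)
  refine ⟨fun v => F v + if v = w then 1 else 0,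
    fun v => by have := hF v; positivity, ?_⟩
  have hfun : (fun v => (D v - E v) - (F v + if v = w then 1 else 0))
      = (fun v => (D v - (E v + if v = w then 1 else 0)) - F v) := by
    funext v; ring
  unfold Multigraph.DEquiv
  rw [hfun]
  exact hFeq

lemma rankGe_mono (H : Multigraph) (D : H.Divisor) (w : H.V) {k n : ℕ}
    (hkn : k ≤ n) (h : H.RankGe D n) : H.RankGe D k := by
  induction n with
  | zero => simpa [Nat.le_zero.mp hkn] using h
  | succ m ih =>
    rcases Nat.lt_or_ge k (m + 1) with hlt | hge
    · exact ih (Nat.lt_succ_iff.mp hlt) (rankGe_of_succ H D w h)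
    · have : k = m + 1 := le_antisymm hkn hge
      simpa [this] using h

/-- For a `v₀`-reduced divisor `D` of rank at least 1 on a subdivision `H`
of a connected loopless multigraph `G`, and a vertex `w` with `D w = 0`, the maximal
valid subset `A ⊆ V(H) \ {w}` (the unburned set of Dhar's algorithm) contains `v₀`. -/
theorem dhar_central_vertex_unburned
    (G : Multigraph) (hG : G.Connected) (H : Multigraph) (S : Subdivision G H)
    (v0 : G.V) (D : H.Divisor)
    (hred : H.Reduced D (S.emb v0)) (hrank : 1 ≤ H.rank D)
    (w : H.V) (hw : D w = 0)
    (A : Finset H.V) (hAvalid : H.Valid D A) (hwA : w ∉ A)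
    (hAmax : ∀ B : Finset H.V, H.Valid D B → w ∉ B → B ⊆ A) :
    S.emb v0 ∈ A := by
  classical
  -- From rank ≥ 1 deduce RankGe D 1.
  have h1 : H.RankGe D 1 := by
    unfold Multigraph.rank at hrank
    by_cases h0 : H.RankGe D 0
    · rw [if_pos h0] at hrank
      by_cases hbdd : BddAbove {k : ℕ | H.RankGe D k}
      · have hmem := Nat.sSup_mem ⟨0, by exact h0⟩ hbdd
        have hs : 1 ≤ sSup {k : ℕ | H.RankGe D k} := by exact_mod_cast hrank
        exact rankGe_mono H D w hs hmem
      · obtain ⟨k, hk, hk1⟩ := not_bddAbove_iff.mp hbdd 0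
        exact rankGe_mono H D w hk1 hk
    · rw [if_neg h0] at hrank; omega
  -- Apply with E = δ_w.
  obtain ⟨F, hF, x, hx⟩ := h1 (fun v => if v = w then 1 else 0)
    (fun v => by positivity)
    (by simp [Multigraph.deg, Finset.sum_ite_eq' Finset.univ w (fun _ => (1 : ℤ))])
  -- B = set of maximizers of x
  obtain ⟨vm, -, hvm⟩ := Finset.exists_max_image Finset.univ x ⟨w, Finset.mem_univ w⟩
  set B : Finset H.V := Finset.univ.filter (fun v => x v = x vm) with hB
  have hmemB : ∀ v, v ∈ B ↔ x v = x vm := by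
    intro v; simp [hB]
  have hle : ∀ v, x v ≤ x vm := fun v => hvm v (Finset.mem_univ v)
  -- B is valid
  have hBvalid : H.Valid D B := by
    intro v hv
    have hxv : x v = x vm := (hmemB v).mp hv
    have key : (∑ u ∈ Bᶜ, (H.m v u : ℤ)) ≤ ∑ u, (H.m v u : ℤ) * (x v - x u) := by
      rw [← Finset.sum_add_sum_compl B (fun u => (H.m v u : ℤ) * (x v - x u))]
      have h1 : (0 : ℤ) ≤ ∑ u ∈ B, (H.m v u : ℤ) * (x v - x u) :=
        Finset.sum_nonneg fun u _ => mul_nonneg (by positivity)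
          (by have := hle u; omega)
      have h2 : (∑ u ∈ Bᶜ, (H.m v u : ℤ)) ≤ ∑ u ∈ Bᶜ, (H.m v u : ℤ) * (x v - x u) := by
        apply Finset.sum_le_sum
        intro u hu
        have hxu : x u ≠ x vm := by
          intro h; exact Finset.mem_compl.mp hu ((hmemB u).mpr h)
        have : x u + 1 ≤ x v := by have := hle u; omega
        nlinarith [Int.natCast_nonneg (H.m v u)]
      linarith
    have hDveq : D v - (if v = w then 1 else 0) - F v
        = ∑ u, (H.m v u : ℤ) * (x v - x u) := hx v
    have hFv := hF v
    have hite : (0 : ℤ) ≤ (if v = w then 1 else 0) := by positivity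
    linarith
  -- w ∉ B
  have hwB : w ∉ B := by
    intro hwmem
    have hxw : x w = x vm := (hmemB w).mp hwmem
    have hsum : (0 : ℤ) ≤ ∑ u, (H.m w u : ℤ) * (x w - x u) :=
      Finset.sum_nonneg fun u _ => mul_nonneg (by positivity)
        (by have := hle u; omega)
    have hxw' : D w - 1 - F w = ∑ u, (H.m w u : ℤ) * (x w - x u) := by
      have := hx w
      simpa using this
    have hFw := hF w
    linarith
  -- conclude
  have hBne : B.Nonempty := ⟨vm, (hmemB vm).mpr rfl⟩
  exact hAmax B hBvalid hwB (hred.2 B hBvalid hBne)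
end

section
/- Let G be a connected loopless multigraph, let v₀ ∈ V(G), and let e₁,…,e_k be the edges of G incident with v₀ (listed with multiplicity), where e_i joins v₀ to a vertex v_i ≠ v₀. Let H be a subdivision of G, let D be a v₀-reduced divisor on H of rank at least 1, let w ∈ V(H) be a vertex with D(w) = 0, and let A be the maximal valid subset of V(H) ∖ {w} with respect to D (the set of unburned vertices of Dhar's burning algorithm run on (H, D, w)). Then for every subset I ⊆ {i ∈ {1,…,k} : v_i ∉ A}, the total number of chips of D on the union ⋃_{i∈I} P^{e_i}[v₀, v_i) is at least |I|, where P^{e_i}[v₀, v_i) denotes the vertex set of the path of H replacing e_i with the endpoint v_i removed (but v₀ included). -/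
section Aux

variable {α : Type} [DecidableEq α]

/-- Find the first "crossing" pair along a walk. -/
def firstCross (P : α → Prop) [DecidablePred P] : α → List α → α × α
  | a, [] => (a, a)
  | a, b :: l => if P b then firstCross P b l else (a, b)

lemma firstCross_spec (P : α → Prop) [DecidablePred P] :
    ∀ (l : List α) (a : α), P a → (∃ z ∈ l, ¬ P z) →
      P (firstCross P a l).1 ∧ ¬ P (firstCross P a l).2 ∧
      (firstCross P a l).1 ∈ a :: l ∧
      ((firstCross P a l).1, (firstCross P a l).2) ∈ (a :: l).zip l := by
  intro l
  induction l with
  | nil => rintro a _ ⟨z, hz, _⟩; simp at hz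
  | cons b l ih =>
    intro a ha ⟨z, hz, hPz⟩
    by_cases hb : P b
    · have hz' : z ∈ l := by
        rcases List.mem_cons.mp hz with rfl | h
        · exact absurd hb hPz
        · exact h
      have := ih b hb ⟨z, hz', hPz⟩
      simp only [firstCross, if_pos hb] at *
      refine ⟨this.1, this.2.1, ?_, ?_⟩
      · exact List.mem_cons_of_mem _ this.2.2.1
      · exact List.mem_cons_of_mem _ this.2.2.2
    · simp only [firstCross, if_neg hb]
      exact ⟨ha, hb, List.mem_cons_self, List.mem_cons_self⟩

lemma adjCount_pos {x y a : α} {l : List α} (h : (x, y) ∈ (a :: l).zip l) :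
    1 ≤ adjCount x y (a :: l) := by
  unfold adjCount
  simpa using List.count_pos_iff.mpr h

end Aux

namespace Multigraph

lemma reduced_max (H : Multigraph) (D D' : H.Divisor) (q : H.V)
    (hred : H.Reduced D q) (heff : H.Effective D') (heq : H.DEquiv D D') :
    D' q ≤ D q := by
  obtain ⟨x, hx⟩ := heq
  obtain ⟨v0, -, hv0⟩ := Finset.exists_max_image Finset.univ x ⟨q, Finset.mem_univ q⟩
  set M := x v0 with hM
  set A : Finset H.V := Finset.univ.filter (fun v => x v = M) with hA
  have hvalid : H.Valid D A := by
    intro v hv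
    have hxv : x v = M := by simpa [hA] using hv
    have h1 : D v - D' v = ∑ u, (H.m v u : ℤ) * (x v - x u) := hx v
    have h2 : ∑ u ∈ Aᶜ, (H.m v u : ℤ) ≤ ∑ u, (H.m v u : ℤ) * (x v - x u) := by
      rw [← Finset.sum_add_sum_compl A]
      have hA0 : ∑ u ∈ A, (H.m v u : ℤ) * (x v - x u) = 0 := by
        apply Finset.sum_eq_zero
        intro u hu
        have : x u = M := by simpa [hA] using hu
        simp [hxv, this]
      rw [hA0, zero_add]
      apply Finset.sum_le_sum
      intro u hu
      have hu' : x u ≠ M := by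
        simp only [hA, Finset.mem_compl, Finset.mem_filter, Finset.mem_univ,
          true_and] at hu
        exact hu
      have hle : x u ≤ M := hv0 u (Finset.mem_univ u)
      have : 1 ≤ x v - x u := by omega
      nlinarith [Int.ofNat_nonneg (H.m v u)]
    have := heff v
    omega
  have hqA : q ∈ A := hred.2 A hvalid ⟨v0, by simp [hA, hM]⟩
  have hxq : x q = M := by simpa [hA] using hqA
  have h1 : D q - D' q = ∑ u, (H.m q u : ℤ) * (x q - x u) := hx q
  have h2 : 0 ≤ ∑ u, (H.m q u : ℤ) * (x q - x u) := by
    apply Finset.sum_nonneg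
    intro u _
    have : x u ≤ M := hv0 u (Finset.mem_univ u)
    have : 0 ≤ x q - x u := by omega
    positivity
  omega

lemma rank_ge_of_one_le_rank (H : Multigraph) (D : H.Divisor) (h : 1 ≤ H.rank D) :
    H.RankGe D 0 ∧ ∃ k : ℕ, 1 ≤ k ∧ H.RankGe D k := by
  unfold Multigraph.rank at h
  split at h
  case isTrue h0 =>
    refine ⟨h0, ?_⟩
    have hb : BddAbove {k : ℕ | H.RankGe D k} := by
      by_contra hb
      rw [csSup_of_not_bddAbove hb, csSup_empty] at h
      norm_num at h
    exact ⟨sSup {k : ℕ | H.RankGe D k}, by exact_mod_cast h,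
      Nat.sSup_mem ⟨0, by exact h0⟩ hb⟩
  case isFalse => omega

end Multigraph

/-- In the setting of Dhar's algorithm run on `(H, D, w)` for a `v₀`-reduced
divisor `D` of rank at least 1, for every set `I` of edges of `G` incident with `v₀`
(indexed as pairs `(v, j)` with `j < m(v₀, v)`) whose other endpoints are burned, the
half-open paths `P^{e_i}[v₀, v_i)` together carry at least `|I|` chips. -/
theorem dhar_burned_neighbours_chip_count
    (G : Multigraph) (hG : G.Connected) (H : Multigraph) (S : Subdivision G H)
    (v0 : G.V) (D : H.Divisor)
    (hred : H.Reduced D (S.emb v0)) (hrank : 1 ≤ H.rank D)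
    (w : H.V) (hw : D w = 0)
    (A : Finset H.V) (hAvalid : H.Valid D A) (hwA : w ∉ A)
    (hAmax : ∀ B : Finset H.V, H.Valid D B → w ∉ B → B ⊆ A)
    (I : Finset ((v : G.V) × Fin (G.m v0 v)))
    (hI : ∀ p ∈ I, S.emb p.1 ∉ A) :
    (I.card : ℤ) ≤
      ∑ x ∈ I.biUnion (fun p => insert (S.emb v0) (S.path v0 p.1 p.2).toFinset), D x := by
  classical
  rcases I.eq_empty_or_nonempty with rfl | hIne
  · simp
  -- Step 1: A is nonempty (otherwise D would be w-reduced with D w = 0, contradicting rank ≥ 1)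
  have hAne : A.Nonempty := by
    by_contra hA
    rw [Finset.not_nonempty_iff_eq_empty] at hA
    obtain ⟨h0, k, hk1, hk⟩ := H.rank_ge_of_one_le_rank D hrank
    have hD0 : 0 ≤ D (S.emb v0) := by
      obtain ⟨F, hFeff, hFeq⟩ := h0 (fun _ => 0) (fun v => le_refl 0)
        (by simp [Multigraph.deg])
      have heq : H.DEquiv D F := by
        have hfun : (fun v => D v - F v) = (fun v => D v - (fun _ => (0:ℤ)) v - F v) := by
          funext v; ring
        rw [Multigraph.DEquiv, hfun]
        exact hFeq
      exact le_trans (hFeff _) (H.reduced_max D F (S.emb v0) hred hFeff heq)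
    have hwred : H.Reduced D w := by
      constructor
      · intro v hv
        by_cases hve : v = S.emb v0
        · subst hve; exact hD0
        · exact hred.1 v hve
      · intro B hB hBne
        by_contra hwB
        obtain ⟨b, hb⟩ := hBne
        have := hAmax B hB hwB hb
        rw [hA] at this
        simp at this
    set E : H.Divisor := fun v => if v = w then (k:ℤ) else 0 with hE
    obtain ⟨F, hFeff, hFeq⟩ := hk E
      (fun v => by by_cases h : v = w <;> simp [hE, h])
      (by simp [Multigraph.deg, hE, Finset.sum_ite_eq'])
    have heq : H.DEquiv D (fun v => F v + E v) := by
      have hfun : (fun v => D v - (F v + E v)) = (fun v => (D v - E v) - F v) := by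
        funext v; ring
      rw [Multigraph.DEquiv, hfun]
      exact hFeq
    have hle := H.reduced_max D _ w hwred
      (fun v => add_nonneg (hFeff v) (by by_cases h : v = w <;> simp [hE, h])) heq
    have : (0:ℤ) ≤ F w := hFeff w
    simp only [hE, if_pos rfl] at hle
    omega
  have hv0A : S.emb v0 ∈ A := hred.2 A hAvalid hAne
  set e0 := S.emb v0 with he0
  -- crossing pairs
  set c : ((v : G.V) × Fin (G.m v0 v)) → H.V :=
    fun p => (firstCross (· ∈ A) e0 (S.path v0 p.1 p.2 ++ [S.emb p.1])).1 with hc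
  set d : ((v : G.V) × Fin (G.m v0 v)) → H.V :=
    fun p => (firstCross (· ∈ A) e0 (S.path v0 p.1 p.2 ++ [S.emb p.1])).2 with hd
  have hfc : ∀ p ∈ I, c p ∈ A ∧ d p ∉ A ∧
      c p ∈ e0 :: (S.path v0 p.1 p.2 ++ [S.emb p.1]) ∧
      (c p, d p) ∈ (e0 :: (S.path v0 p.1 p.2 ++ [S.emb p.1])).zip
        (S.path v0 p.1 p.2 ++ [S.emb p.1]) := by
    intro p hp
    exact firstCross_spec (· ∈ A) (S.path v0 p.1 p.2 ++ [S.emb p.1]) e0 hv0A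
      ⟨S.emb p.1, by simp, hI p hp⟩
  have hcpath : ∀ p ∈ I, c p ≠ e0 → c p ∈ S.path v0 p.1 p.2 := by
    intro p hp hne
    obtain ⟨hcA, -, hcmem, -⟩ := hfc p hp
    rcases List.mem_cons.mp hcmem with h | h
    · exact absurd h hne
    rcases List.mem_append.mp h with h | h
    · exact h
    · simp only [List.mem_singleton] at h
      exact absurd (h ▸ hcA) (hI p hp)
  -- the adjCount bound
  have hterm : ∀ (x y : H.V) (v : G.V) (j : Fin (G.m v0 v)),
      adjCount x y (S.emb v0 :: (S.path v0 v j ++ [S.emb v])) ≤ H.m x y := by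
    intro x y v j
    rw [S.edges x y]
    calc adjCount x y (S.emb v0 :: (S.path v0 v j ++ [S.emb v]))
        ≤ ∑ j' : Fin (G.m v0 v),
            adjCount x y (S.emb v0 :: (S.path v0 v j' ++ [S.emb v])) :=
          Finset.single_le_sum
            (f := fun j' : Fin (G.m v0 v) =>
              adjCount x y (S.emb v0 :: (S.path v0 v j' ++ [S.emb v])))
            (fun _ _ => Nat.zero_le _) (Finset.mem_univ j)
      _ ≤ ∑ v', ∑ j' : Fin (G.m v0 v'),
            adjCount x y (S.emb v0 :: (S.path v0 v' j' ++ [S.emb v'])) :=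
          Finset.single_le_sum
            (f := fun b => ∑ j' : Fin (G.m v0 b),
              adjCount x y (S.emb v0 :: (S.path v0 b j' ++ [S.emb b])))
            (fun _ _ => Nat.zero_le _) (Finset.mem_univ v)
      _ ≤ ∑ u, ∑ v', ∑ j' : Fin (G.m u v'),
            adjCount x y (S.emb u :: (S.path u v' j' ++ [S.emb v'])) :=
          Finset.single_le_sum
            (f := fun a => ∑ v', ∑ j' : Fin (G.m a v'),
              adjCount x y (S.emb a :: (S.path a v' j' ++ [S.emb v'])))
            (fun _ _ => Nat.zero_le _) (Finset.mem_univ v0)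
  -- split I
  set I0 := I.filter (fun p => c p = e0) with hI0def
  set I1 := I.filter (fun p => c p ≠ e0) with hI1def
  -- chips at internal crossing vertices
  have hchip1 : ∀ p ∈ I1, 1 ≤ D (c p) := by
    intro p hp
    obtain ⟨hpI, hpne⟩ := Finset.mem_filter.mp hp
    obtain ⟨hcA, hdA, -, hzip⟩ := hfc p hpI
    have hm : 1 ≤ H.m (c p) (d p) :=
      le_trans (adjCount_pos hzip) (hterm (c p) (d p) p.1 p.2)
    have h1 : (H.m (c p) (d p) : ℤ) ≤ ∑ u ∈ Aᶜ, (H.m (c p) u : ℤ) :=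
      Finset.single_le_sum (fun u _ => Int.ofNat_nonneg _) (Finset.mem_compl.mpr hdA)
    have h2 := hAvalid (c p) hcA
    omega
  -- injectivity of c on I1
  have hinj : ∀ p ∈ I1, ∀ q ∈ I1, c p = c q → p = q := by
    intro p hp q hq hpq
    obtain ⟨hpI, hpne⟩ := Finset.mem_filter.mp hp
    obtain ⟨hqI, hqne⟩ := Finset.mem_filter.mp hq
    have h1 := hcpath p hpI hpne
    have h2 := hcpath q hqI hqne
    rw [hpq] at h1
    rcases S.disj v0 q.1 q.2 v0 p.1 p.2 (c q) h2 h1 with ⟨-, hv, hj⟩ | ⟨hv, -, -⟩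
    · rcases p with ⟨pv, pj⟩
      rcases q with ⟨qv, qj⟩
      dsimp at hv hj
      subst hv
      rw [Fin.ext hj]
    · have := p.2.pos
      rw [← hv] at this
      simp [G.loopless] at this
  -- chips at e0 cover I0
  have hchip0 : (I0.card : ℤ) ≤ D e0 := by
    have hfib : I0.card = ∑ u ∈ Aᶜ, (I0.filter (fun p => d p = u)).card := by
      apply Finset.card_eq_sum_card_fiberwise
      intro p hp
      exact Finset.mem_compl.mpr (hfc p (Finset.mem_filter.mp hp).1).2.1
    have hub : ∀ u ∈ Aᶜ, (I0.filter (fun p => d p = u)).card ≤ H.m e0 u := by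
      intro u hu
      calc (I0.filter (fun p => d p = u)).card
          = ∑ p ∈ I0.filter (fun p => d p = u), 1 := by simp
        _ ≤ ∑ p ∈ I0.filter (fun p => d p = u),
              adjCount e0 u (S.emb v0 :: (S.path v0 p.1 p.2 ++ [S.emb p.1])) := by
            apply Finset.sum_le_sum
            intro p hp
            obtain ⟨hp0, hdu⟩ := Finset.mem_filter.mp hp
            obtain ⟨hpI, hce⟩ := Finset.mem_filter.mp hp0
            have hzip := (hfc p hpI).2.2.2
            rw [hce, hdu] at hzip
            exact adjCount_pos hzip
        _ ≤ ∑ p : (v : G.V) × Fin (G.m v0 v),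
              adjCount e0 u (S.emb v0 :: (S.path v0 p.1 p.2 ++ [S.emb p.1])) :=
            Finset.sum_le_sum_of_subset (Finset.subset_univ _)
        _ = ∑ v', ∑ j' : Fin (G.m v0 v'),
              adjCount e0 u (S.emb v0 :: (S.path v0 v' j' ++ [S.emb v'])) := by
            rw [← Finset.univ_sigma_univ, Finset.sum_sigma]
        _ ≤ ∑ a, ∑ v', ∑ j' : Fin (G.m a v'),
              adjCount e0 u (S.emb a :: (S.path a v' j' ++ [S.emb v'])) :=
            Finset.single_le_sum
              (f := fun a => ∑ v', ∑ j' : Fin (G.m a v'),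
                adjCount e0 u (S.emb a :: (S.path a v' j' ++ [S.emb v'])))
              (fun _ _ => Nat.zero_le _) (Finset.mem_univ v0)
        _ = H.m e0 u := (S.edges e0 u).symm
    have h1 : (I0.card : ℤ) ≤ ∑ u ∈ Aᶜ, (H.m e0 u : ℤ) := by
      rw [hfib]
      push_cast
      exact Finset.sum_le_sum (fun u hu => by exact_mod_cast hub u hu)
    exact le_trans h1 (hAvalid e0 hv0A)
  -- assemble
  set U := I.biUnion (fun p => insert e0 (S.path v0 p.1 p.2).toFinset) with hU
  set T := I1.image c with hT
  have he0T : e0 ∉ T := by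
    rw [hT]
    intro hmem
    obtain ⟨p, hp, hpe⟩ := Finset.mem_image.mp hmem
    exact (Finset.mem_filter.mp hp).2 hpe
  have hsub : insert e0 T ⊆ U := by
    intro x hx
    rcases Finset.mem_insert.mp hx with rfl | hx
    · obtain ⟨p, hp⟩ := hIne
      exact Finset.mem_biUnion.mpr ⟨p, hp, Finset.mem_insert_self _ _⟩
    · obtain ⟨p, hp, rfl⟩ := Finset.mem_image.mp hx
      obtain ⟨hpI, hpne⟩ := Finset.mem_filter.mp hp
      exact Finset.mem_biUnion.mpr ⟨p, hpI,
        Finset.mem_insert_of_mem (List.mem_toFinset.mpr (hcpath p hpI hpne))⟩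
  have hmono : ∑ x ∈ insert e0 T, D x ≤ ∑ x ∈ U, D x := by
    apply Finset.sum_le_sum_of_subset_of_nonneg hsub
    intro x hxU hxT
    have hxe : x ≠ e0 := fun h => hxT (h ▸ Finset.mem_insert_self _ _)
    exact hred.1 x hxe
  have hTsum : (I1.card : ℤ) ≤ ∑ x ∈ T, D x := by
    rw [hT, Finset.sum_image hinj]
    calc (I1.card : ℤ) = ∑ _p ∈ I1, (1:ℤ) := by simp
      _ ≤ ∑ p ∈ I1, D (c p) := Finset.sum_le_sum hchip1
  have hins : ∑ x ∈ insert e0 T, D x = D e0 + ∑ x ∈ T, D x := Finset.sum_insert he0T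
  have hcard : I0.card + I1.card = I.card := by
    rw [hI0def, hI1def]
    exact Finset.card_filter_add_card_filter_not _
  have : (I.card : ℤ) = (I0.card : ℤ) + (I1.card : ℤ) := by exact_mod_cast hcard.symm
  rw [hU] at *
  omega
end

section
/- Let H be a subdivision of the minimal tricycle T, with central vertex v₀, and let D be a v₀-reduced divisor on H of rank at least 1 with deg(D) ≤ 5. Then D has at least one chip on each of the three transition paths of H, i.e. ∑_{v ∈ P} D(v) ≥ 1 for each transition path P. -/
/-! ## The minimal tricycle and tricycle graphs -/

/-- Auxiliary edge table for the minimal tricycle on vertex set `Fin 13`: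
`0` is the central vertex `v₀`; `1,…,6` are the transition vertices
`v₁⁻, v₁⁺, v₂⁻, v₂⁺, v₃⁻, v₃⁺`; `7,…,12` are the midpoints of the length-2 paths
joining `v₀` to the six transition vertices. Each unordered edge is listed once. -/
def tmAux : ℕ → ℕ → ℕ
  | 1, 2 => 2 | 3, 4 => 2 | 5, 6 => 2
  | 2, 3 => 1 | 4, 5 => 1 | 6, 1 => 1
  | 0, 7 => 1 | 0, 8 => 1 | 0, 9 => 1 | 0, 10 => 1 | 0, 11 => 1 | 0, 12 => 1
  | 7, 1 => 1 | 8, 2 => 1 | 9, 3 => 1 | 10, 4 => 1 | 11, 5 => 1 | 12, 6 => 1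
  | _, _ => 0

/-- The minimal tricycle `T`: three pairs of parallel edges (the cycles), three
transition edges, and a central vertex joined to each transition vertex by a path
of length 2. -/
def minimalTricycle : Multigraph where
  V := Fin 13
  fintypeV := inferInstance
  decEqV := inferInstance
  m := fun x y => tmAux x.val y.val + tmAux y.val x.val
  symm := fun u v => Nat.add_comm _ _
  loopless := by decide

/-- The three transition edges of the minimal tricycle, as ordered pairs
`(v₁⁺, v₂⁻), (v₂⁺, v₃⁻), (v₃⁺, v₁⁻)` of vertices of `Fin 13`. -/
def transitionPairs : List (Fin 13 × Fin 13) := [(2, 3), (4, 5), (6, 1)]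

/-- The vertex set of the transition path of a subdivision `S` of the minimal tricycle
corresponding to the transition edge `(a, b)` (including its endpoints). -/
def transitionPath {H : Multigraph} (S : Subdivision minimalTricycle H)
    (a b : Fin 13) (j : Fin (minimalTricycle.m a b)) : Finset H.V :=
  insert (S.emb a) (insert (S.emb b) (S.path a b j).toFinset)

/-- A tricycle structure on `G`: `G` is a subdivision of the minimal tricycle in which
only the cycle edges (the edges of multiplicity 2) may be subdivided; the cycles of the
tricycle are obtained by subdividing the three pairs of parallel edges arbitrarily. -/
structure TricycleStruct (G : Multigraph) where
  sub : Subdivision minimalTricycle G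
  trivialOn : ∀ u v (j : Fin (minimalTricycle.m u v)),
    minimalTricycle.m u v ≠ 2 → sub.path u v j = []

/-- The vertices of the minimal tricycle, indexed by `Fin 13`. -/
def tv (i : Fin 13) : minimalTricycle.V := i

section Chains
variable {V : Type} (A : Finset V)

lemma chainF : ∀ (mid : List V) (s e : V),
    (∀ p q : V, (p, q) ∈ (s :: (mid ++ [e])).zip (mid ++ [e]) → p ∈ A → q ∈ A) →
    s ∈ A → e ∈ A := by
  intro mid
  induction mid with
  | nil => intro s e h hs; exact h s e (by simp) hs
  | cons m t ih =>
      intro s e h hs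
      have hm : m ∈ A := h s m (by simp) hs
      exact ih m e (fun p q hpq hp => h p q (by simp only [List.cons_append, List.zip_cons_cons]; exact List.mem_cons_of_mem _ hpq) hp) hm

lemma chainB : ∀ (mid : List V) (s e : V),
    (∀ p q : V, (p, q) ∈ (s :: (mid ++ [e])).zip (mid ++ [e]) → q ∈ A → p ∈ A) →
    s ∉ A → ∀ z ∈ s :: (mid ++ [e]), z ∉ A := by
  intro mid
  induction mid with
  | nil =>
      intro s e h hs z hz
      rcases (by simpa using hz : z = s ∨ z = e) with rfl | rfl
      · exact hs
      · intro hzA; exact hs (h s z (by simp) hzA)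
  | cons m t ih =>
      intro s e h hs z hz
      have hm : m ∉ A := fun hmA => hs (h s m (by simp) hmA)
      rcases (by simpa using hz : z = s ∨ z = m ∨ z ∈ t ∨ z = e) with rfl | hz'
      · exact hs
      · exact ih m e (fun p q hpq hq => h p q (by simp only [List.cons_append, List.zip_cons_cons]; exact List.mem_cons_of_mem _ hpq) hq) hm z (by simpa using hz')

end Chains

lemma sum_fin_two' {n : ℕ} (h : n = 2) (j0 j1 : Fin n) (h0 : (j0 : ℕ) = 0) (h1 : (j1 : ℕ) = 1)
    (f : Fin n → ℕ) : ∑ j, f j = f j0 + f j1 := by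
  subst h
  have e0 : j0 = 0 := Fin.ext h0
  have e1 : j1 = 1 := Fin.ext h1
  subst e0; subst e1
  exact Fin.sum_univ_two f

section Helpers

variable {H : Multigraph} (S : Subdivision minimalTricycle H)

/-- The full list of vertices of the subdivided edge `(p, r, j)`. -/
def Lst (p r : Fin 13) (j : Fin (minimalTricycle.m p r)) : List H.V :=
  S.emb p :: (S.path p r j ++ [S.emb r])

/-- Number of `A`→`Aᶜ` crossings of a list. -/
def crossN (A : Finset H.V) (l : List H.V) : ℕ :=
  ∑ v ∈ A, ∑ u ∈ Aᶜ, adjCount v u l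

/-- Total crossing count of a subdivided edge (summed over parallel copies). -/
def SS (A : Finset H.V) (p r : Fin 13) : ℕ :=
  ∑ v ∈ A, ∑ u ∈ Aᶜ, ∑ j, adjCount v u (Lst S p r j)

lemma adj_le_m (x y : H.V) (p r : Fin 13) (j : Fin (minimalTricycle.m p r)) :
    adjCount x y (Lst S p r j) ≤ H.m x y := by
  rw [S.edges x y]
  calc adjCount x y (Lst S p r j)
      ≤ ∑ j' : Fin (minimalTricycle.m p r), adjCount x y (Lst S p r j') :=
        Finset.single_le_sum (f := fun j' => adjCount x y (Lst S p r j'))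
          (fun _ _ => Nat.zero_le _) (Finset.mem_univ j)
    _ ≤ ∑ r', ∑ j' : Fin (minimalTricycle.m p r'), adjCount x y (Lst S p r' j') :=
        Finset.single_le_sum (f := fun r' => ∑ j' : Fin (minimalTricycle.m p r'), adjCount x y (Lst S p r' j'))
          (fun _ _ => Nat.zero_le _) (Finset.mem_univ r)
    _ ≤ _ :=
        Finset.single_le_sum (f := fun p' => ∑ r', ∑ j' : Fin (minimalTricycle.m p' r'), adjCount x y (Lst S p' r' j'))
          (fun _ _ => Nat.zero_le _) (Finset.mem_univ p)

lemma cross_prop (A : Finset H.V) (p r : Fin 13) (j : Fin (minimalTricycle.m p r))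
    (hz : crossN A (Lst S p r j) = 0) (hp : S.emb p ∈ A) : S.emb r ∈ A := by
  apply chainF A (S.path p r j) (S.emb p) (S.emb r) ?_ hp
  intro x y hxy hx
  by_contra hy
  have h1 : 0 < adjCount x y (Lst S p r j) := List.count_pos_iff.mpr hxy
  have h2 := (Finset.sum_eq_zero_iff.mp hz) x hx
  have h3 := (Finset.sum_eq_zero_iff.mp h2) y (Finset.mem_compl.mpr hy)
  omega

lemma crossN_le_SS (A : Finset H.V) (p r : Fin 13) (j : Fin (minimalTricycle.m p r)) :
    crossN A (Lst S p r j) ≤ SS S A p r := by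
  refine Finset.sum_le_sum fun v _ => Finset.sum_le_sum fun u _ => ?_
  exact Finset.single_le_sum (f := fun j' => adjCount v u (Lst S p r j'))
    (fun _ _ => Nat.zero_le _) (Finset.mem_univ j)

lemma SS_prop (A : Finset H.V) (p r : Fin 13) (j : Fin (minimalTricycle.m p r))
    (hz : SS S A p r = 0) (hp : S.emb p ∈ A) : S.emb r ∈ A :=
  cross_prop S A p r j (Nat.le_zero.mp (hz ▸ crossN_le_SS S A p r j)) hp

end Helpers

/-- The 24 oriented tricycle edges used by the strand argument. -/
def EE : List (Fin 13 × Fin 13) :=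
  [(0,7),(0,8),(0,9),(0,10),(0,11),(0,12),(7,1),(8,2),(9,3),(10,4),(11,5),(12,6),
   (1,2),(4,3),(3,4),(6,5),(5,6),(2,1),(5,4),(6,1),(1,6),(2,3),(3,2),(4,5)]

lemma count_bound {H : Multigraph} (S : Subdivision minimalTricycle H) (A : Finset H.V) :
    SS S A 0 7 + SS S A 0 8 + SS S A 0 9 + SS S A 0 10 + SS S A 0 11 + SS S A 0 12 +
    SS S A 7 1 + SS S A 8 2 + SS S A 9 3 + SS S A 10 4 + SS S A 11 5 + SS S A 12 6 +
    SS S A 1 2 + SS S A 4 3 + SS S A 3 4 + SS S A 6 5 + SS S A 5 6 + SS S A 2 1 +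
    SS S A 5 4 + SS S A 6 1 + SS S A 1 6 + SS S A 2 3 + SS S A 3 2 + SS S A 4 5
      ≤ ∑ v ∈ A, ∑ u ∈ Aᶜ, H.m v u := by
  have hm : ∀ v u : H.V,
      (EE.map (fun z => ∑ j, adjCount v u (Lst S z.1 z.2 j))).sum ≤ H.m v u := by
    intro v u
    rw [S.edges v u]
    have h1 : (∑ p, ∑ r, ∑ j : Fin (minimalTricycle.m p r),
        adjCount v u (S.emb p :: (S.path p r j ++ [S.emb r])))
        = ∑ z ∈ (Finset.univ ×ˢ Finset.univ : Finset (Fin 13 × Fin 13)),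
            ∑ j, adjCount v u (Lst S z.1 z.2 j) := by
      rw [Finset.sum_product]
      rfl
    rw [h1]
    have h2 : (EE.map (fun z => ∑ j, adjCount v u (Lst S z.1 z.2 j))).sum
        = ∑ z ∈ EE.toFinset, ∑ j, adjCount v u (Lst S z.1 z.2 j) := by
      rw [List.sum_toFinset _ (by decide)]
    rw [h2]
    exact Finset.sum_le_sum_of_subset (by intro z _; simp [Finset.mem_product])
  have step : (∑ v ∈ A, ∑ u ∈ Aᶜ, (EE.map (fun z => ∑ j, adjCount v u (Lst S z.1 z.2 j))).sum)
      ≤ ∑ v ∈ A, ∑ u ∈ Aᶜ, H.m v u :=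
    Finset.sum_le_sum fun v _ => Finset.sum_le_sum fun u _ => hm v u
  refine le_trans (le_of_eq ?_) step
  have hEE : ∀ f : Fin 13 × Fin 13 → ℕ, (EE.map f).sum = f (0,7) + f (0,8) + f (0,9) + f (0,10) + f (0,11) + f (0,12) + f (7,1) + f (8,2) + f (9,3) + f (10,4) + f (11,5) + f (12,6) + f (1,2) + f (4,3) + f (3,4) + f (6,5) + f (5,6) + f (2,1) + f (5,4) + f (6,1) + f (1,6) + f (2,3) + f (3,2) + f (4,5) := by
    intro f
    simp only [EE, List.map_cons, List.map_nil, List.sum_cons, List.sum_nil]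
    omega
  simp only [hEE]
  simp only [Finset.sum_add_distrib, Finset.sum_const, smul_eq_mul, mul_zero, Finset.sum_const_zero]
  simp only [SS]

lemma no_cut {H : Multigraph} (S : Subdivision minimalTricycle H) (A : Finset H.V)
    (a b : Fin 13) (hab : (a, b) ∈ transitionPairs)
    (h5 : ∑ v ∈ A, ∑ u ∈ Aᶜ, H.m v u ≤ 5)
    (h0 : S.emb (tv 0) ∈ A) (ha : S.emb a ∉ A) (hb : S.emb b ∉ A) : False := by
  have hcb := count_bound S A
  have hab' : (a = 2 ∧ b = 3) ∨ (a = 4 ∧ b = 5) ∨ (a = 6 ∧ b = 1) := by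
    simpa [transitionPairs, Prod.ext_iff] using hab
  have c12 : SS S A 1 2 = crossN A (Lst S 1 2 ⟨0, by decide⟩) + crossN A (Lst S 1 2 ⟨1, by decide⟩) := by
    simp only [SS, crossN]
    rw [← Finset.sum_add_distrib]
    refine Finset.sum_congr rfl fun v _ => ?_
    rw [← Finset.sum_add_distrib]
    exact Finset.sum_congr rfl fun u _ => sum_fin_two' (by decide) _ _ rfl rfl _
  have c43 : SS S A 4 3 = crossN A (Lst S 4 3 ⟨0, by decide⟩) + crossN A (Lst S 4 3 ⟨1, by decide⟩) := by
    simp only [SS, crossN]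
    rw [← Finset.sum_add_distrib]
    refine Finset.sum_congr rfl fun v _ => ?_
    rw [← Finset.sum_add_distrib]
    exact Finset.sum_congr rfl fun u _ => sum_fin_two' (by decide) _ _ rfl rfl _
  have c34 : SS S A 3 4 = crossN A (Lst S 3 4 ⟨0, by decide⟩) + crossN A (Lst S 3 4 ⟨1, by decide⟩) := by
    simp only [SS, crossN]
    rw [← Finset.sum_add_distrib]
    refine Finset.sum_congr rfl fun v _ => ?_
    rw [← Finset.sum_add_distrib]
    exact Finset.sum_congr rfl fun u _ => sum_fin_two' (by decide) _ _ rfl rfl _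
  have c65 : SS S A 6 5 = crossN A (Lst S 6 5 ⟨0, by decide⟩) + crossN A (Lst S 6 5 ⟨1, by decide⟩) := by
    simp only [SS, crossN]
    rw [← Finset.sum_add_distrib]
    refine Finset.sum_congr rfl fun v _ => ?_
    rw [← Finset.sum_add_distrib]
    exact Finset.sum_congr rfl fun u _ => sum_fin_two' (by decide) _ _ rfl rfl _
  have c56 : SS S A 5 6 = crossN A (Lst S 5 6 ⟨0, by decide⟩) + crossN A (Lst S 5 6 ⟨1, by decide⟩) := by
    simp only [SS, crossN]
    rw [← Finset.sum_add_distrib]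
    refine Finset.sum_congr rfl fun v _ => ?_
    rw [← Finset.sum_add_distrib]
    exact Finset.sum_congr rfl fun u _ => sum_fin_two' (by decide) _ _ rfl rfl _
  have c21 : SS S A 2 1 = crossN A (Lst S 2 1 ⟨0, by decide⟩) + crossN A (Lst S 2 1 ⟨1, by decide⟩) := by
    simp only [SS, crossN]
    rw [← Finset.sum_add_distrib]
    refine Finset.sum_congr rfl fun v _ => ?_
    rw [← Finset.sum_add_distrib]
    exact Finset.sum_congr rfl fun u _ => sum_fin_two' (by decide) _ _ rfl rfl _
  rcases hab' with ⟨rfl, rfl⟩ | ⟨rfl, rfl⟩ | ⟨rfl, rfl⟩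
  · -- (a, b) = (2, 3)
    have s1 : 1 ≤ SS S A 0 8 + SS S A 8 2 := by
      by_contra hcon; push_neg at hcon
      have h1 : SS S A 0 8 = 0 := by omega
      have h2 : SS S A 8 2 = 0 := by omega
      exact ha (SS_prop S A 8 2 ⟨0, by decide⟩ h2 (SS_prop S A 0 8 ⟨0, by decide⟩ h1 h0))
    have s2 : 1 ≤ SS S A 0 9 + SS S A 9 3 := by
      by_contra hcon; push_neg at hcon
      have h1 : SS S A 0 9 = 0 := by omega
      have h2 : SS S A 9 3 = 0 := by omega
      exact hb (SS_prop S A 9 3 ⟨0, by decide⟩ h2 (SS_prop S A 0 9 ⟨0, by decide⟩ h1 h0))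
    have s3 : 1 ≤ SS S A 0 7 + SS S A 7 1 + crossN A (Lst S 1 2 ⟨0, by decide⟩) := by
      by_contra hcon; push_neg at hcon
      have h1 : SS S A 0 7 = 0 := by omega
      have h2 : SS S A 7 1 = 0 := by omega
      have h3 : crossN A (Lst S 1 2 ⟨0, by decide⟩) = 0 := by omega
      exact ha (cross_prop S A 1 2 ⟨0, by decide⟩ h3
        (SS_prop S A 7 1 ⟨0, by decide⟩ h2 (SS_prop S A 0 7 ⟨0, by decide⟩ h1 h0)))
    have s4 : 1 ≤ SS S A 0 10 + SS S A 10 4 + crossN A (Lst S 4 3 ⟨0, by decide⟩) := by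
      by_contra hcon; push_neg at hcon
      have h1 : SS S A 0 10 = 0 := by omega
      have h2 : SS S A 10 4 = 0 := by omega
      have h3 : crossN A (Lst S 4 3 ⟨0, by decide⟩) = 0 := by omega
      exact hb (cross_prop S A 4 3 ⟨0, by decide⟩ h3
        (SS_prop S A 10 4 ⟨0, by decide⟩ h2 (SS_prop S A 0 10 ⟨0, by decide⟩ h1 h0)))
    have s5 : 1 ≤ SS S A 0 11 + SS S A 11 5 + SS S A 5 4 + crossN A (Lst S 4 3 ⟨1, by decide⟩) := by
      by_contra hcon; push_neg at hcon
      have h1 : SS S A 0 11 = 0 := by omega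
      have h2 : SS S A 11 5 = 0 := by omega
      have h3 : SS S A 5 4 = 0 := by omega
      have h4 : crossN A (Lst S 4 3 ⟨1, by decide⟩) = 0 := by omega
      exact hb (cross_prop S A 4 3 ⟨1, by decide⟩ h4 (SS_prop S A 5 4 ⟨0, by decide⟩ h3
        (SS_prop S A 11 5 ⟨0, by decide⟩ h2 (SS_prop S A 0 11 ⟨0, by decide⟩ h1 h0))))
    have s6 : 1 ≤ SS S A 0 12 + SS S A 12 6 + SS S A 6 1 + crossN A (Lst S 1 2 ⟨1, by decide⟩) := by
      by_contra hcon; push_neg at hcon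
      have h1 : SS S A 0 12 = 0 := by omega
      have h2 : SS S A 12 6 = 0 := by omega
      have h3 : SS S A 6 1 = 0 := by omega
      have h4 : crossN A (Lst S 1 2 ⟨1, by decide⟩) = 0 := by omega
      exact ha (cross_prop S A 1 2 ⟨1, by decide⟩ h4 (SS_prop S A 6 1 ⟨0, by decide⟩ h3
        (SS_prop S A 12 6 ⟨0, by decide⟩ h2 (SS_prop S A 0 12 ⟨0, by decide⟩ h1 h0))))
    omega
  · -- (a, b) = (4, 5)
    have s1 : 1 ≤ SS S A 0 10 + SS S A 10 4 := by
      by_contra hcon; push_neg at hcon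
      have h1 : SS S A 0 10 = 0 := by omega
      have h2 : SS S A 10 4 = 0 := by omega
      exact ha (SS_prop S A 10 4 ⟨0, by decide⟩ h2 (SS_prop S A 0 10 ⟨0, by decide⟩ h1 h0))
    have s2 : 1 ≤ SS S A 0 11 + SS S A 11 5 := by
      by_contra hcon; push_neg at hcon
      have h1 : SS S A 0 11 = 0 := by omega
      have h2 : SS S A 11 5 = 0 := by omega
      exact hb (SS_prop S A 11 5 ⟨0, by decide⟩ h2 (SS_prop S A 0 11 ⟨0, by decide⟩ h1 h0))
    have s3 : 1 ≤ SS S A 0 9 + SS S A 9 3 + crossN A (Lst S 3 4 ⟨0, by decide⟩) := by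
      by_contra hcon; push_neg at hcon
      have h1 : SS S A 0 9 = 0 := by omega
      have h2 : SS S A 9 3 = 0 := by omega
      have h3 : crossN A (Lst S 3 4 ⟨0, by decide⟩) = 0 := by omega
      exact ha (cross_prop S A 3 4 ⟨0, by decide⟩ h3
        (SS_prop S A 9 3 ⟨0, by decide⟩ h2 (SS_prop S A 0 9 ⟨0, by decide⟩ h1 h0)))
    have s4 : 1 ≤ SS S A 0 12 + SS S A 12 6 + crossN A (Lst S 6 5 ⟨0, by decide⟩) := by
      by_contra hcon; push_neg at hcon
      have h1 : SS S A 0 12 = 0 := by omega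
      have h2 : SS S A 12 6 = 0 := by omega
      have h3 : crossN A (Lst S 6 5 ⟨0, by decide⟩) = 0 := by omega
      exact hb (cross_prop S A 6 5 ⟨0, by decide⟩ h3
        (SS_prop S A 12 6 ⟨0, by decide⟩ h2 (SS_prop S A 0 12 ⟨0, by decide⟩ h1 h0)))
    have s5 : 1 ≤ SS S A 0 7 + SS S A 7 1 + SS S A 1 6 + crossN A (Lst S 6 5 ⟨1, by decide⟩) := by
      by_contra hcon; push_neg at hcon
      have h1 : SS S A 0 7 = 0 := by omega
      have h2 : SS S A 7 1 = 0 := by omega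
      have h3 : SS S A 1 6 = 0 := by omega
      have h4 : crossN A (Lst S 6 5 ⟨1, by decide⟩) = 0 := by omega
      exact hb (cross_prop S A 6 5 ⟨1, by decide⟩ h4 (SS_prop S A 1 6 ⟨0, by decide⟩ h3
        (SS_prop S A 7 1 ⟨0, by decide⟩ h2 (SS_prop S A 0 7 ⟨0, by decide⟩ h1 h0))))
    have s6 : 1 ≤ SS S A 0 8 + SS S A 8 2 + SS S A 2 3 + crossN A (Lst S 3 4 ⟨1, by decide⟩) := by
      by_contra hcon; push_neg at hcon
      have h1 : SS S A 0 8 = 0 := by omega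
      have h2 : SS S A 8 2 = 0 := by omega
      have h3 : SS S A 2 3 = 0 := by omega
      have h4 : crossN A (Lst S 3 4 ⟨1, by decide⟩) = 0 := by omega
      exact ha (cross_prop S A 3 4 ⟨1, by decide⟩ h4 (SS_prop S A 2 3 ⟨0, by decide⟩ h3
        (SS_prop S A 8 2 ⟨0, by decide⟩ h2 (SS_prop S A 0 8 ⟨0, by decide⟩ h1 h0))))
    omega
  · -- (a, b) = (6, 1)
    have s1 : 1 ≤ SS S A 0 12 + SS S A 12 6 := by
      by_contra hcon; push_neg at hcon
      have h1 : SS S A 0 12 = 0 := by omega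
      have h2 : SS S A 12 6 = 0 := by omega
      exact ha (SS_prop S A 12 6 ⟨0, by decide⟩ h2 (SS_prop S A 0 12 ⟨0, by decide⟩ h1 h0))
    have s2 : 1 ≤ SS S A 0 7 + SS S A 7 1 := by
      by_contra hcon; push_neg at hcon
      have h1 : SS S A 0 7 = 0 := by omega
      have h2 : SS S A 7 1 = 0 := by omega
      exact hb (SS_prop S A 7 1 ⟨0, by decide⟩ h2 (SS_prop S A 0 7 ⟨0, by decide⟩ h1 h0))
    have s3 : 1 ≤ SS S A 0 11 + SS S A 11 5 + crossN A (Lst S 5 6 ⟨0, by decide⟩) := by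
      by_contra hcon; push_neg at hcon
      have h1 : SS S A 0 11 = 0 := by omega
      have h2 : SS S A 11 5 = 0 := by omega
      have h3 : crossN A (Lst S 5 6 ⟨0, by decide⟩) = 0 := by omega
      exact ha (cross_prop S A 5 6 ⟨0, by decide⟩ h3
        (SS_prop S A 11 5 ⟨0, by decide⟩ h2 (SS_prop S A 0 11 ⟨0, by decide⟩ h1 h0)))
    have s4 : 1 ≤ SS S A 0 8 + SS S A 8 2 + crossN A (Lst S 2 1 ⟨0, by decide⟩) := by
      by_contra hcon; push_neg at hcon
      have h1 : SS S A 0 8 = 0 := by omega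
      have h2 : SS S A 8 2 = 0 := by omega
      have h3 : crossN A (Lst S 2 1 ⟨0, by decide⟩) = 0 := by omega
      exact hb (cross_prop S A 2 1 ⟨0, by decide⟩ h3
        (SS_prop S A 8 2 ⟨0, by decide⟩ h2 (SS_prop S A 0 8 ⟨0, by decide⟩ h1 h0)))
    have s5 : 1 ≤ SS S A 0 10 + SS S A 10 4 + SS S A 4 5 + crossN A (Lst S 5 6 ⟨1, by decide⟩) := by
      by_contra hcon; push_neg at hcon
      have h1 : SS S A 0 10 = 0 := by omega
      have h2 : SS S A 10 4 = 0 := by omega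
      have h3 : SS S A 4 5 = 0 := by omega
      have h4 : crossN A (Lst S 5 6 ⟨1, by decide⟩) = 0 := by omega
      exact ha (cross_prop S A 5 6 ⟨1, by decide⟩ h4 (SS_prop S A 4 5 ⟨0, by decide⟩ h3
        (SS_prop S A 10 4 ⟨0, by decide⟩ h2 (SS_prop S A 0 10 ⟨0, by decide⟩ h1 h0))))
    have s6 : 1 ≤ SS S A 0 9 + SS S A 9 3 + SS S A 3 2 + crossN A (Lst S 2 1 ⟨1, by decide⟩) := by
      by_contra hcon; push_neg at hcon
      have h1 : SS S A 0 9 = 0 := by omega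
      have h2 : SS S A 9 3 = 0 := by omega
      have h3 : SS S A 3 2 = 0 := by omega
      have h4 : crossN A (Lst S 2 1 ⟨1, by decide⟩) = 0 := by omega
      exact hb (cross_prop S A 2 1 ⟨1, by decide⟩ h4 (SS_prop S A 3 2 ⟨0, by decide⟩ h3
        (SS_prop S A 9 3 ⟨0, by decide⟩ h2 (SS_prop S A 0 9 ⟨0, by decide⟩ h1 h0))))
    omega

lemma exists_rankge (H : Multigraph) (D : H.Divisor) (h : 1 ≤ H.rank D) :
    ∃ k : ℕ, 1 ≤ k ∧ H.RankGe D k := by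
  classical
  unfold Multigraph.rank at h
  split_ifs at h with h0
  · by_cases hb : BddAbove {k : ℕ | H.RankGe D k}
    · have hmem := Nat.sSup_mem (s := {k : ℕ | H.RankGe D k}) ⟨0, h0⟩ hb
      exact ⟨sSup {k : ℕ | H.RankGe D k}, by exact_mod_cast h, hmem⟩
    · rw [csSup_of_not_bddAbove hb, csSup_empty] at h
      norm_num at h
  · norm_num at h

lemma build_A (H : Multigraph) (S : Subdivision minimalTricycle H)
    (D : H.Divisor) (hred : H.Reduced D (S.emb (tv 0)))
    (k : ℕ) (hk1 : 1 ≤ k) (hk : H.RankGe D k) (hdeg : H.deg D ≤ 5)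
    (a b : Fin 13) (j : Fin (minimalTricycle.m a b))
    (ha0 : a ≠ 0) (hb0 : b ≠ 0)
    (hchip : ∑ x ∈ transitionPath S a b j, D x ≤ 0) :
    ∃ A : Finset H.V,
      (∑ v ∈ A, ∑ u ∈ Aᶜ, H.m v u ≤ 5) ∧ S.emb (tv 0) ∈ A ∧ S.emb a ∉ A ∧ S.emb b ∉ A := by
  classical
  have haq : S.emb a ≠ S.emb (tv 0) := fun h => ha0 (S.inj h)
  have hbq : S.emb b ≠ S.emb (tv 0) := fun h => hb0 (S.inj h)
  -- the divisor is zero on the transition path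
  have hPne : ∀ p ∈ transitionPath S a b j, p ≠ S.emb (tv 0) := by
    intro p hp
    unfold transitionPath at hp
    rcases Finset.mem_insert.mp hp with rfl | hp
    · exact haq
    rcases Finset.mem_insert.mp hp with rfl | hp
    · exact hbq
    · have := S.fresh a b j p (List.mem_toFinset.mp hp)
      exact fun h => this ⟨tv 0, h.symm⟩
  have hnn : ∀ p ∈ transitionPath S a b j, 0 ≤ D p := fun p hp => hred.1 p (hPne p hp)
  have hD0 : ∀ p ∈ transitionPath S a b j, D p = 0 := by
    have h1 : ∑ x ∈ transitionPath S a b j, D x = 0 :=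
      le_antisymm hchip (Finset.sum_nonneg hnn)
    exact (Finset.sum_eq_zero_iff_of_nonneg hnn).mp h1
  -- apply rank ≥ k to a suitable effective divisor of degree k
  set Ek : H.Divisor :=
    fun v => (if v = S.emb a then 1 else 0) + (if v = S.emb (tv 0) then (k : ℤ) - 1 else 0)
    with hEkdef
  have hEkeff : H.Effective Ek := by
    intro v
    have : (0:ℤ) ≤ (k:ℤ) - 1 := by omega
    simp only [hEkdef]
    split_ifs <;> omega
  have hEkdeg : H.deg Ek = (k : ℤ) := by
    unfold Multigraph.deg
    simp only [hEkdef]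
    rw [Finset.sum_add_distrib]
    rw [Finset.sum_ite_eq' Finset.univ (S.emb a) (fun _ => (1:ℤ))]
    rw [Finset.sum_ite_eq' Finset.univ (S.emb (tv 0)) (fun _ => (k:ℤ) - 1)]
    simp only [Finset.mem_univ, if_true]
    ring
  obtain ⟨F, hFeff, hFD⟩ := hk Ek hEkeff hEkdeg
  obtain ⟨x, hx⟩ := hFD
  obtain ⟨m0, -, hm0⟩ := Finset.exists_max_image Finset.univ x ⟨S.emb (tv 0), Finset.mem_univ _⟩
  set A : Finset H.V := Finset.univ.filter (fun v => x m0 ≤ x v) with hA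
  have hmemA : ∀ v, v ∈ A ↔ x v = x m0 := by
    intro v
    simp only [hA, Finset.mem_filter, Finset.mem_univ, true_and]
    exact ⟨fun h => le_antisymm (hm0 v (Finset.mem_univ v)) h, fun h => h.ge⟩
  have hvalid : H.Valid D A := by
    intro v hv
    have hxv : x v = x m0 := (hmemA v).mp hv
    have hxe : D v - Ek v - F v = ∑ u, (H.m v u : ℤ) * (x v - x u) := hx v
    have hsplit := Finset.sum_add_sum_compl A (fun u => (H.m v u : ℤ) * (x v - x u))
    have hA0 : ∑ u ∈ A, (H.m v u : ℤ) * (x v - x u) = 0 :=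
      Finset.sum_eq_zero fun u hu => by rw [hxv, (hmemA u).mp hu]; ring
    have hB : ∀ u ∈ Aᶜ, (H.m v u : ℤ) ≤ (H.m v u : ℤ) * (x v - x u) := by
      intro u hu
      have hun : ¬ (x m0 ≤ x u) := by
        have := Finset.mem_compl.mp hu
        simpa [hA] using this
      have h1 : 1 ≤ x v - x u := by omega
      nlinarith [Int.natCast_nonneg (H.m v u)]
    have hBs : ∑ u ∈ Aᶜ, (H.m v u : ℤ) ≤ ∑ u ∈ Aᶜ, (H.m v u : ℤ) * (x v - x u) :=
      Finset.sum_le_sum hB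
    have hFv := hFeff v
    have hEv := hEkeff v
    linarith
  have hqA : S.emb (tv 0) ∈ A := hred.2 A hvalid ⟨m0, (hmemA m0).mpr rfl⟩
  have hDa : D (S.emb a) = 0 := hD0 _ (Finset.mem_insert_self _ _)
  have hαA : S.emb a ∉ A := by
    intro hmem
    have hxa : x (S.emb a) = x m0 := (hmemA _).mp hmem
    have h1 : 0 ≤ ∑ u, (H.m (S.emb a) u : ℤ) * (x (S.emb a) - x u) :=
      Finset.sum_nonneg fun u _ => mul_nonneg (Int.natCast_nonneg _)
        (by have := hm0 u (Finset.mem_univ u); omega)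
    have hxe : D (S.emb a) - Ek (S.emb a) - F (S.emb a)
        = ∑ u, (H.m (S.emb a) u : ℤ) * (x (S.emb a) - x u) := hx (S.emb a)
    have hEa : Ek (S.emb a) = 1 := by simp [hEkdef, haq]
    have := hFeff (S.emb a)
    rw [hDa, hEa] at hxe
    linarith
  -- propagate along the transition path: no vertex of it is in A
  have hback : ∀ p' q' : H.V,
      (p', q') ∈ (Lst S a b j).zip (Lst S a b j).tail → q' ∈ A → p' ∈ A := by
    intro p' q' hzip hq'
    have hq'l : q' ∈ Lst S a b j := List.mem_of_mem_tail (List.of_mem_zip hzip).2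
    have hq'P : q' ∈ transitionPath S a b j := by
      unfold transitionPath
      simp only [Lst, List.mem_cons, List.mem_append, List.mem_singleton] at hq'l
      simp only [Finset.mem_insert, List.mem_toFinset]
      tauto
    have hDq' : D q' = 0 := hD0 q' hq'P
    have hvq' := hvalid q' hq'
    by_contra hp'
    have hp'c : p' ∈ Aᶜ := Finset.mem_compl.mpr hp'
    have hnn2 : ∀ u ∈ Aᶜ, (0:ℤ) ≤ (H.m q' u : ℤ) := fun u _ => Int.natCast_nonneg _
    have hzero : (H.m q' p' : ℤ) = 0 :=
      (Finset.sum_eq_zero_iff_of_nonneg hnn2).mp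
        (le_antisymm (by rw [← hDq']; exact hvq') (Finset.sum_nonneg hnn2)) p' hp'c
    have hpos : 0 < adjCount p' q' (Lst S a b j) := List.count_pos_iff.mpr hzip
    have hle : adjCount p' q' (Lst S a b j) ≤ H.m p' q' := adj_le_m S p' q' a b j
    have hsym : H.m q' p' = H.m p' q' := H.symm q' p'
    omega
  have hall : ∀ z ∈ Lst S a b j, z ∉ A :=
    chainB A (S.path a b j) (S.emb a) (S.emb b) hback hαA
  refine ⟨A, ?_, hqA, hαA, hall (S.emb b) (by simp [Lst])⟩
  -- the degree bound
  have h1 : ∑ v ∈ A, ∑ u ∈ Aᶜ, (H.m v u : ℤ) ≤ ∑ v ∈ A, D v :=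
    Finset.sum_le_sum fun v hv => hvalid v hv
  have h2 : ∑ v ∈ A, D v ≤ H.deg D := by
    have hc : 0 ≤ ∑ v ∈ Aᶜ, D v :=
      Finset.sum_nonneg fun v hv => hred.1 v
        (fun h => (Finset.mem_compl.mp hv) (h ▸ hqA))
    have hsp := Finset.sum_add_sum_compl A D
    unfold Multigraph.deg
    linarith
  have hcast : ((∑ v ∈ A, ∑ u ∈ Aᶜ, H.m v u : ℕ) : ℤ) = ∑ v ∈ A, ∑ u ∈ Aᶜ, (H.m v u : ℤ) := by
    push_cast
    rfl
  have hfin : ((∑ v ∈ A, ∑ u ∈ Aᶜ, H.m v u : ℕ) : ℤ) ≤ 5 := by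
    rw [hcast]; linarith
  exact_mod_cast hfin

/-- If `H` is a subdivision of the minimal tricycle and `D` is a
`v₀`-reduced divisor on `H` of rank at least 1 with `deg D ≤ 5`, then `D` has at least
one chip on each of the three transition paths of `H`. -/
theorem transition_paths_have_a_chip
    (H : Multigraph) (S : Subdivision minimalTricycle H)
    (D : H.Divisor) (hred : H.Reduced D (S.emb (tv 0))) (hrank : 1 ≤ H.rank D)
    (hdeg : H.deg D ≤ 5) :
    ∀ a b : Fin 13, (a, b) ∈ transitionPairs →
      ∀ j : Fin (minimalTricycle.m a b),
        1 ≤ ∑ x ∈ transitionPath S a b j, D x := by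
  intro a b hab j
  by_contra hlt
  push_neg at hlt
  have hchip : ∑ x ∈ transitionPath S a b j, D x ≤ 0 := by omega
  obtain ⟨k, hk1, hk⟩ := exists_rankge H D hrank
  have hab' : (a = 2 ∧ b = 3) ∨ (a = 4 ∧ b = 5) ∨ (a = 6 ∧ b = 1) := by
    simpa [transitionPairs, Prod.ext_iff] using hab
  have hne : a ≠ 0 ∧ b ≠ 0 := by
    rcases hab' with ⟨rfl, rfl⟩ | ⟨rfl, rfl⟩ | ⟨rfl, rfl⟩ <;> exact ⟨by decide, by decide⟩
  obtain ⟨A, h5, h0, ha, hb⟩ := build_A H S D hred k hk1 hk hdeg a b j hne.1 hne.2 hchip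
  exact no_cut S A a b hab h5 h0 ha hb
end

section
/- Let G be an (H,t)-skewered graph over connected loopless multigraphs G₁,…,G_n with base vertices w₁,…,w_n, and let D be a divisor on G of rank at least 1 which is w₁-reduced and satisfies deg(D) < t. Then D is w_i-reduced for every i ∈ {1,…,n}, and for every i the restriction of D to V(G_i) is a divisor of rank at least 1 on G_i. -/
/-! ## Skewered graphs -/

/-- The skeleton graph of the skewering construction: the disjoint union of the
multigraphs `Gs i`, together with `t` parallel edges between the base vertices `w i`
and `w j` for every edge `ij` of the connected simple graph `H`. -/
def skeleton {n : ℕ} (H : SimpleGraph (Fin n)) [DecidableRel H.Adj]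
    (Gs : Fin n → Multigraph) (w : ∀ i, (Gs i).V) (t : ℕ) : Multigraph where
  V := Σ i, (Gs i).V
  fintypeV := inferInstance
  decEqV := inferInstance
  m := fun x y =>
    (if h : x.1 = y.1 then (Gs y.1).m (h ▸ x.2) y.2 else 0)
      + (if x.1 ≠ y.1 ∧ H.Adj x.1 y.1 ∧ x.2 = w x.1 ∧ y.2 = w y.1 then t else 0)
  symm := by
    rintro ⟨i, u⟩ ⟨j, v⟩
    dsimp only
    congr 1
    · by_cases h : i = j
      · subst h
        rw [dif_pos rfl, dif_pos rfl]
        exact (Gs i).symm u v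
      · rw [dif_neg h, dif_neg (Ne.symm h)]
    · by_cases h : i = j
      · subst h; simp
      · by_cases ha : H.Adj i j
        · have ha' := ha.symm
          simp [h, Ne.symm h, ha, ha', and_comm]
        · have ha' : ¬ H.Adj j i := fun hs => ha hs.symm
          simp [ha, ha']
  loopless := by
    rintro ⟨i, u⟩
    dsimp only
    rw [dif_pos rfl]
    simp [(Gs i).loopless u]

/-- `G` is an `(H, t)`-skewered graph over the multigraphs `Gs i` with base vertices
`w i`: `G` is obtained from the disjoint union of the `Gs i` by adding `t` parallel
edges between `w i` and `w j` for each edge `ij` of `H` and subdividing these added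
edges arbitrarily (the edges inside each `Gs i` are not subdivided). -/
structure Skewered {n : ℕ} (H : SimpleGraph (Fin n)) [DecidableRel H.Adj]
    (Gs : Fin n → Multigraph) (w : ∀ i, (Gs i).V) (t : ℕ) (G : Multigraph) where
  sub : Subdivision (skeleton H Gs w t) G
  trivialIntra : ∀ (x y : (skeleton H Gs w t).V) (j : Fin ((skeleton H Gs w t).m x y)),
    x.1 = y.1 → sub.path x y j = []
namespace Multigraph

variable {G : Multigraph}

lemma sum_principal {P : G.Divisor} (h : G.Principal P) : ∑ v, P v = 0 := by
  obtain ⟨x, hx⟩ := h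
  have : ∑ v, P v = ∑ v, ∑ u, (G.m v u : ℤ) * (x v - x u) := by
    exact Finset.sum_congr rfl fun v _ => hx v
  rw [this]
  have h2 : ∑ v, ∑ u, (G.m v u : ℤ) * (x v - x u)
      = ∑ u, ∑ v, (G.m v u : ℤ) * (x v - x u) := Finset.sum_comm
  have h3 : ∑ u, ∑ v, (G.m v u : ℤ) * (x v - x u)
      = -∑ v, ∑ u, (G.m v u : ℤ) * (x v - x u) := by
    rw [← Finset.sum_neg_distrib]
    refine Finset.sum_congr rfl fun u _ => ?_
    rw [← Finset.sum_neg_distrib]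
    refine Finset.sum_congr rfl fun v _ => ?_
    rw [G.symm u v]; ring
  omega
end Multigraph
namespace Multigraph
variable {G : Multigraph}

lemma deg_sub_of_rankGe [Nonempty G.V] {D : G.Divisor} {k : ℕ} (h : G.RankGe D k) :
    (k : ℤ) ≤ G.deg D := by
  obtain ⟨v₀⟩ := ‹Nonempty G.V›
  obtain ⟨F, hF, hP⟩ := h (fun v => if v = v₀ then (k : ℤ) else 0)
    (fun v => by dsimp; split <;> simp) (by simp [deg])
  have h0 := G.sum_principal hP
  simp only [Finset.sum_sub_distrib] at h0
  have hdegE : ∑ v, (if v = v₀ then (k:ℤ) else 0) = k := by simp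
  have hF0 : 0 ≤ ∑ v, F v := Finset.sum_nonneg fun v _ => hF v
  simp only [Finset.sum_sub_distrib, hdegE] at h0
  unfold deg
  omega

lemma rankGe_mono [Nonempty G.V] {D : G.Divisor} {k j : ℕ} (h : G.RankGe D k)
    (hjk : j ≤ k) : G.RankGe D j := by
  obtain ⟨v₀⟩ := ‹Nonempty G.V›
  intro E hE hdE
  obtain ⟨F, hF, hP⟩ := h (fun v => E v + if v = v₀ then ((k : ℤ) - j) else 0)
    (fun v => by have := hE v; dsimp; split <;> [omega; omega])
    (by unfold deg at hdE ⊢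
        rw [Finset.sum_add_distrib, hdE]
        simp)
  refine ⟨fun v => F v + if v = v₀ then ((k : ℤ) - j) else 0,
    fun v => by have := hF v; dsimp; split <;> [omega; omega], ?_⟩
  obtain ⟨x, hx⟩ := hP
  exact ⟨x, fun v => by have := hx v; dsimp at this ⊢; omega⟩

lemma rankGe_zero_of_one_le_rank {D : G.Divisor} (h : 1 ≤ G.rank D) :
    G.RankGe D 0 := by
  unfold rank at h
  by_contra hc
  rw [if_neg hc] at h
  omega

lemma rankGe_one_of_one_le_rank [Nonempty G.V] {D : G.Divisor} (h : 1 ≤ G.rank D) :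
    G.RankGe D 1 := by
  have h0 := rankGe_zero_of_one_le_rank h
  unfold rank at h
  rw [if_pos h0] at h
  set S : Set ℕ := {k | G.RankGe D k} with hS
  have hbdd : BddAbove S := by
    refine ⟨(G.deg D).toNat, fun k hk => ?_⟩
    have := deg_sub_of_rankGe (G := G) hk
    omega
  have hne : S.Nonempty := ⟨0, h0⟩
  have hmem : sSup S ∈ S := Nat.sSup_mem hne hbdd
  have h1 : 1 ≤ sSup S := by exact_mod_cast h
  exact rankGe_mono hmem h1

lemma one_le_rank_of_rankGe_one [Nonempty G.V] {D : G.Divisor} (h : G.RankGe D 1) :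
    1 ≤ G.rank D := by
  have h0 : G.RankGe D 0 := rankGe_mono h (by omega)
  unfold rank
  rw [if_pos h0]
  have hbdd : BddAbove {k | G.RankGe D k} := by
    refine ⟨(G.deg D).toNat, fun k hk => ?_⟩
    have := deg_sub_of_rankGe (G := G) hk
    omega
  have : 1 ≤ sSup {k | G.RankGe D k} := le_csSup hbdd h
  exact_mod_cast this

end Multigraph
namespace Multigraph
variable {G : Multigraph}

lemma valid_mono {D D' : G.Divisor} {A : Finset G.V} (h : G.Valid D A)
    (hle : ∀ v, D v ≤ D' v) : G.Valid D' A :=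
  fun v hv => le_trans (h v hv) (hle v)

/-- The argmax set of a chip-firing witness is a valid set. -/
lemma argmax_valid [Nonempty G.V] {D F : G.Divisor} (hF : G.Effective F)
    (x : G.V → ℤ) (hx : ∀ v, D v - F v = ∑ u, (G.m v u : ℤ) * (x v - x u)) :
    ∃ A : Finset G.V, A.Nonempty ∧ G.Valid D A ∧
      (∀ v ∈ A, F v ≤ D v) ∧ (∀ v ∈ A, ∀ z, x z ≤ x v) := by
  obtain ⟨vm, -, hvm⟩ := Finset.exists_max_image Finset.univ x ⟨Classical.arbitrary G.V,
    Finset.mem_univ _⟩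
  set A : Finset G.V := Finset.univ.filter (fun v => x v = x vm) with hA
  have hxmax : ∀ v ∈ A, ∀ z, x z ≤ x v := by
    intro v hv z
    simp only [hA, Finset.mem_filter] at hv
    rw [hv.2]
    exact hvm z (Finset.mem_univ z)
  refine ⟨A, ⟨vm, by simp [hA]⟩, ?_, ?_, hxmax⟩
  · intro v hv
    have key : ∑ u ∈ Aᶜ, (G.m v u : ℤ) ≤ ∑ u, (G.m v u : ℤ) * (x v - x u) := by
      have h1 : ∑ u ∈ Aᶜ, (G.m v u : ℤ) * (x v - x u)
            + ∑ u ∈ A, (G.m v u : ℤ) * (x v - x u)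
          = ∑ u, (G.m v u : ℤ) * (x v - x u) := Finset.sum_compl_add_sum A _
      have h2 : ∑ u ∈ A, (G.m v u : ℤ) * (x v - x u) = 0 := by
        refine Finset.sum_eq_zero fun u hu => ?_
        simp only [hA, Finset.mem_filter] at hu hv
        rw [hv.2, hu.2]; ring
      have h3 : ∑ u ∈ Aᶜ, (G.m v u : ℤ) ≤ ∑ u ∈ Aᶜ, (G.m v u : ℤ) * (x v - x u) := by
        refine Finset.sum_le_sum fun u hu => ?_
        simp only [Finset.mem_compl, hA, Finset.mem_filter, Finset.mem_univ,
          true_and] at hu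
        have hle : x u ≤ x vm := hvm u (Finset.mem_univ u)
        have hne : x u ≠ x vm := hu
        have hv2 : x v = x vm := by
          simpa [hA, Finset.mem_filter] using hv
        have h4 : 1 ≤ x v - x u := by omega
        nlinarith [Int.natCast_nonneg (G.m v u)]
      omega
    have := hx v
    have hFv := hF v
    omega
  · intro v hv
    have h0 : 0 ≤ ∑ u, (G.m v u : ℤ) * (x v - x u) := by
      refine Finset.sum_nonneg fun u _ => ?_
      have h1 : x u ≤ x v := hxmax v hv u
      nlinarith [Int.natCast_nonneg (G.m v u)]
    have := hx v
    omega

end Multigraph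
section Lists
variable {α : Type} [DecidableEq α]

/-- If neither `X` nor `Y` occurs in `P` and `P` is nonempty, the pair `(X, Y)` does not
occur consecutively in `a :: P ++ [b]`. -/
lemma adjCount_eq_zero_of_notMem {X Y : α} :
    ∀ (P : List α) (a b : α), X ∉ P → Y ∉ P → P ≠ [] →
      adjCount X Y (a :: (P ++ [b])) = 0 := by
  intro P
  induction P with
  | nil => intro a b _ _ h; exact absurd rfl h
  | cons p P' ih =>
    intro a b hX hY _
    have hXp : X ≠ p := fun h => hX (h ▸ List.mem_cons_self (a := p) (l := P'))
    have hYp : Y ≠ p := fun h => hY (h ▸ List.mem_cons_self (a := p) (l := P'))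
    have hX' : X ∉ P' := fun h => hX (List.mem_cons_of_mem _ h)
    have hY' : Y ∉ P' := fun h => hY (List.mem_cons_of_mem _ h)
    cases P' with
    | nil =>
      simp only [adjCount, List.cons_append, List.nil_append, List.zip, List.zipWith,
        List.count_cons, List.count_nil]
      simp [Prod.ext_iff]
      simp [List.count_cons, Prod.ext_iff, Ne.symm hXp, Ne.symm hYp]
    | cons q P'' =>
      have step : adjCount X Y (a :: ((p :: q :: P'') ++ [b]))
          = (if (X, Y) = (a, p) then 1 else 0)
            + adjCount X Y (p :: ((q :: P'') ++ [b])) := by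
        simp only [adjCount, List.cons_append, List.zip, List.zipWith, List.count_cons, List.tail_cons, List.zipWith_cons_cons]
        split <;> split <;> simp_all [Prod.ext_iff] <;> omega
      rw [step, ih p b hX' hY' (by simp), if_neg (by simp [Prod.ext_iff, hYp])]

lemma mem_zip_of_adjCount_pos {X Y : α} {l : List α}
    (h : 0 < adjCount X Y l) : (X, Y) ∈ l.zip l.tail := by
  unfold adjCount at h
  exact List.count_pos_iff.mp h

lemma adjCount_pos_of_mem_zip {X Y : α} {l : List α}
    (h : (X, Y) ∈ l.zip l.tail) : 0 < adjCount X Y l :=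
  List.count_pos_iff.mpr h

/-- A walk starting inside a set and ending outside it has a crossing consecutive pair. -/
lemma exists_crossing {A : α → Prop} :
    ∀ (P : List α) (a b : α), A a → ¬ A b →
      ∃ p q, A p ∧ ¬ A q ∧ (p, q) ∈ (a :: (P ++ [b])).zip (P ++ [b]) := by
  intro P
  induction P with
  | nil => intro a b ha hb; exact ⟨a, b, ha, hb, by simp [List.zip]⟩
  | cons c P' ih =>
    intro a b ha hb
    by_cases hc : A c
    · obtain ⟨p, q, hp, hq, hmem⟩ := ih c b hc hb
      refine ⟨p, q, hp, hq, ?_⟩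
      have : (c :: (P' ++ [b])).zip (P' ++ [b])
          ⊆ ((a :: (c :: P' ++ [b])).zip (c :: P' ++ [b])) := by
        intro z hz
        simp only [List.cons_append, List.zip, List.zipWith]
        exact List.mem_cons_of_mem _ hz
      exact this hmem
    · exact ⟨a, c, ha, hc, by simp [List.zip, List.zipWith]⟩

end Lists
section SkewerAux

variable {n : ℕ} {H : SimpleGraph (Fin n)} [DecidableRel H.Adj]
  {Gs : Fin n → Multigraph} {w : ∀ i, (Gs i).V} {t : ℕ} {G : Multigraph}

lemma sk_m_intra (i : Fin n) (a b : (Gs i).V) :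
    (skeleton H Gs w t).m ⟨i, a⟩ ⟨i, b⟩ = (Gs i).m a b := by
  simp [skeleton]

lemma sk_m_pos {u v : (skeleton H Gs w t).V} (h : u.1 ≠ v.1)
    (hpos : 0 < (skeleton H Gs w t).m u v) :
    H.Adj u.1 v.1 ∧ u.2 = w u.1 ∧ v.2 = w v.1 := by
  simp only [skeleton, dif_neg h, zero_add] at hpos
  by_cases hc : u.1 ≠ v.1 ∧ H.Adj u.1 v.1 ∧ u.2 = w u.1 ∧ v.2 = w v.1
  · exact ⟨hc.2.1, hc.2.2⟩
  · rw [if_neg hc] at hpos; omega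

lemma sk_m_skewer {i j : Fin n} (hij : H.Adj i j) :
    (skeleton H Gs w t).m ⟨i, w i⟩ ⟨j, w j⟩ = t := by
  have hne : i ≠ j := hij.ne
  simp [skeleton, hne, hij]

variable (sk : Skewered H Gs w t G)

lemma adjCount_emb_emb (s s' u v : (skeleton H Gs w t).V)
    (j : Fin ((skeleton H Gs w t).m u v)) :
    adjCount (sk.sub.emb s) (sk.sub.emb s')
      (sk.sub.emb u :: (sk.sub.path u v j ++ [sk.sub.emb v]))
    = if s = u ∧ s' = v ∧ sk.sub.path u v j = [] then 1 else 0 := by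
  cases hP : sk.sub.path u v j with
  | nil =>
    simp only [hP, List.nil_append, adjCount]
    have hz : ([sk.sub.emb u, sk.sub.emb v].zip [sk.sub.emb v])
        = [(sk.sub.emb u, sk.sub.emb v)] := rfl
    rw [show ([sk.sub.emb u, sk.sub.emb v] : List G.V).tail = [sk.sub.emb v] from rfl] at *
    rw [hz]
    by_cases h : s = u ∧ s' = v
    · obtain ⟨rfl, rfl⟩ := h
      simp
    · rw [if_neg (fun hc => h ⟨hc.1, hc.2.1⟩)]
      have hne : (sk.sub.emb s, sk.sub.emb s') ≠ (sk.sub.emb u, sk.sub.emb v) := by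
        intro hc
        injection hc with h1 h2
        exact h ⟨sk.sub.inj h1, sk.sub.inj h2⟩
      simp [List.count_cons]
      intro h1 h2; exact hne (Prod.ext h1.symm h2.symm)
  | cons p P' =>
    rw [if_neg (by simp [hP])]
    refine adjCount_eq_zero_of_notMem (p :: P') _ _ ?_ ?_ (by simp)
    · rw [← hP]; exact fun hm => sk.sub.fresh u v j _ hm ⟨s, rfl⟩
    · rw [← hP]; exact fun hm => sk.sub.fresh u v j _ hm ⟨s', rfl⟩

/-- Within an embedded component, edge multiplicities agree. -/
lemma m_emb_intra (i : Fin n) (a b : (Gs i).V) :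
    G.m (sk.sub.emb ⟨i, a⟩) (sk.sub.emb ⟨i, b⟩) = (Gs i).m a b := by
  set A : (skeleton H Gs w t).V := ⟨i, a⟩ with hA
  set B : (skeleton H Gs w t).V := ⟨i, b⟩ with hB
  show G.m (sk.sub.emb A) (sk.sub.emb B) = _
  rw [sk.sub.edges]
  have h1 : ∀ (u v : (skeleton H Gs w t).V) (j : Fin ((skeleton H Gs w t).m u v)),
      adjCount (sk.sub.emb A) (sk.sub.emb B)
        (sk.sub.emb u :: (sk.sub.path u v j ++ [sk.sub.emb v]))
      = if u = A ∧ v = B then 1 else 0 := by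
    intro u v j
    rw [adjCount_emb_emb]
    by_cases h : u = A ∧ v = B
    · obtain ⟨h1, h2⟩ := h
      subst h1; subst h2
      rw [if_pos ⟨rfl, rfl, sk.trivialIntra _ _ j rfl⟩, if_pos ⟨rfl, rfl⟩]
    · rw [if_neg (fun hc => h ⟨hc.1.symm, hc.2.1.symm⟩), if_neg h]
  calc ∑ u, ∑ v, ∑ j : Fin ((skeleton H Gs w t).m u v),
        adjCount (sk.sub.emb A) (sk.sub.emb B)
          (sk.sub.emb u :: (sk.sub.path u v j ++ [sk.sub.emb v]))
      = ∑ u, ∑ v, (if u = A ∧ v = B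
          then (skeleton H Gs w t).m u v else 0) := by
        refine Finset.sum_congr rfl fun u _ => Finset.sum_congr rfl fun v _ => ?_
        rw [Finset.sum_congr rfl fun j _ => h1 u v j]
        split <;> simp
    _ = (skeleton H Gs w t).m A B := by
        have hrow : ∀ u : (skeleton H Gs w t).V, (∑ v, if u = A ∧ v = B
            then (skeleton H Gs w t).m u v else 0)
            = if u = A
              then (skeleton H Gs w t).m u B else 0 := by
          intro u
          by_cases hu : u = A <;> simp [hu]
        simp only [hrow]
        simp
    _ = (Gs i).m a b := sk_m_intra i a b

/-- Away from the base vertex, embedded vertices have no external neighbours. -/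
lemma m_emb_external (i : Fin n) (a : (Gs i).V) (ha : a ≠ w i) (z : G.V)
    (hz : ∀ b : (Gs i).V, z ≠ sk.sub.emb ⟨i, b⟩) : G.m (sk.sub.emb ⟨i, a⟩) z = 0 := by
  rw [sk.sub.edges]
  refine Finset.sum_eq_zero fun u _ => Finset.sum_eq_zero fun v _ =>
    Finset.sum_eq_zero fun j _ => ?_
  by_contra hc
  have hpos : 0 < adjCount (sk.sub.emb ⟨i, a⟩) z
      (sk.sub.emb u :: (sk.sub.path u v j ++ [sk.sub.emb v])) := Nat.pos_of_ne_zero hc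
  have hmem := mem_zip_of_adjCount_pos hpos
  have hmpos : 0 < (skeleton H Gs w t).m u v := j.pos
  cases hP : sk.sub.path u v j with
  | nil =>
    rw [hP] at hmem
    simp only [List.nil_append] at hmem
    have hpair : (sk.sub.emb ⟨i, a⟩, z) = (sk.sub.emb u, sk.sub.emb v) := by
      simpa using hmem
    injection hpair with h1 h2
    have hu : u = ⟨i, a⟩ := (sk.sub.inj h1).symm
    subst hu
    obtain ⟨vi, vc⟩ := v
    by_cases hv : i = vi
    · subst hv
      exact hz vc h2
    · have := sk_m_pos (u := ⟨i, a⟩) (v := ⟨vi, vc⟩) hv hmpos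
      exact ha this.2.1
  | cons p P' =>
    have hne : u.1 ≠ v.1 := fun h => by
      have := sk.trivialIntra u v j h
      rw [hP] at this; exact List.cons_ne_nil _ _ this
    have hbase := sk_m_pos hne hmpos
    have hmemX : sk.sub.emb ⟨i, a⟩ ∈ sk.sub.emb u :: (sk.sub.path u v j ++ [sk.sub.emb v]) :=
      (List.of_mem_zip hmem).1
    rcases List.mem_cons.mp hmemX with h | h
    · have hu : u = ⟨i, a⟩ := (sk.sub.inj h).symm
      rw [hu] at hbase
      exact ha hbase.2.1
    · rcases List.mem_append.mp h with h2 | h2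
      · exact sk.sub.fresh u v j _ h2 ⟨_, rfl⟩
      · have hv : v = ⟨i, a⟩ := (sk.sub.inj (List.mem_singleton.mp h2)).symm
        rw [hv] at hbase
        exact ha hbase.2.2

end SkewerAux
section Counting

variable {n : ℕ} {H : SimpleGraph (Fin n)} [DecidableRel H.Adj]
  {Gs : Fin n → Multigraph} {w : ∀ i, (Gs i).V} {t : ℕ} {G : Multigraph}
  (sk : Skewered H Gs w t G)

/-- If a valid set contains a base vertex but misses an `H`-adjacent base vertex,
then the set carries at least `t` chips. -/
lemma valid_chips_ge {D : G.Divisor} {A : Finset G.V} (hA : G.Valid D A)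
    {i j : Fin n} (hadj : H.Adj i j)
    (hin : sk.sub.emb ⟨i, w i⟩ ∈ A) (hout : sk.sub.emb ⟨j, w j⟩ ∉ A) :
    (t : ℤ) ≤ ∑ v ∈ A, D v := by
  set W : (skeleton H Gs w t).V := ⟨i, w i⟩ with hW
  set W' : (skeleton H Gs w t).V := ⟨j, w j⟩ with hW'
  have hskm : (skeleton H Gs w t).m W W' = t := sk_m_skewer hadj
  have hcount : ∀ jdx : Fin ((skeleton H Gs w t).m W W'),
      1 ≤ ∑ v ∈ A, ∑ z ∈ Aᶜ, adjCount v z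
        (sk.sub.emb W :: (sk.sub.path W W' jdx ++ [sk.sub.emb W'])) := by
    intro jdx
    obtain ⟨p, q, hp, hq, hmem⟩ := exists_crossing (A := (· ∈ A))
      (sk.sub.path W W' jdx) (sk.sub.emb W) (sk.sub.emb W') hin hout
    have h1 : 0 < adjCount p q
        (sk.sub.emb W :: (sk.sub.path W W' jdx ++ [sk.sub.emb W'])) :=
      adjCount_pos_of_mem_zip hmem
    calc (1 : ℕ) ≤ adjCount p q (sk.sub.emb W :: (sk.sub.path W W' jdx ++ [sk.sub.emb W'])) := h1
      _ ≤ ∑ z ∈ Aᶜ, adjCount p z (sk.sub.emb W :: (sk.sub.path W W' jdx ++ [sk.sub.emb W'])) :=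
          Finset.single_le_sum (f := fun z => adjCount p z
            (sk.sub.emb W :: (sk.sub.path W W' jdx ++ [sk.sub.emb W'])))
            (fun _ _ => Nat.zero_le _) (Finset.mem_compl.mpr hq)
      _ ≤ ∑ v ∈ A, ∑ z ∈ Aᶜ, adjCount v z
            (sk.sub.emb W :: (sk.sub.path W W' jdx ++ [sk.sub.emb W'])) :=
          Finset.single_le_sum (f := fun v => ∑ z ∈ Aᶜ, adjCount v z
            (sk.sub.emb W :: (sk.sub.path W W' jdx ++ [sk.sub.emb W'])))
            (fun _ _ => Nat.zero_le _) hp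
  have hedge : ∀ v z : G.V, (∑ jdx : Fin ((skeleton H Gs w t).m W W'),
      adjCount v z (sk.sub.emb W :: (sk.sub.path W W' jdx ++ [sk.sub.emb W'])))
      ≤ G.m v z := by
    intro v z
    rw [sk.sub.edges v z]
    calc (∑ jdx : Fin ((skeleton H Gs w t).m W W'),
          adjCount v z (sk.sub.emb W :: (sk.sub.path W W' jdx ++ [sk.sub.emb W'])))
        ≤ ∑ v' : (skeleton H Gs w t).V, ∑ jdx : Fin ((skeleton H Gs w t).m W v'),
            adjCount v z (sk.sub.emb W :: (sk.sub.path W v' jdx ++ [sk.sub.emb v'])) :=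
          Finset.single_le_sum (f := fun v' => ∑ jdx : Fin ((skeleton H Gs w t).m W v'),
            adjCount v z (sk.sub.emb W :: (sk.sub.path W v' jdx ++ [sk.sub.emb v'])))
            (fun _ _ => Nat.zero_le _) (Finset.mem_univ W')
      _ ≤ ∑ u : (skeleton H Gs w t).V, ∑ v' : (skeleton H Gs w t).V,
            ∑ jdx : Fin ((skeleton H Gs w t).m u v'),
            adjCount v z (sk.sub.emb u :: (sk.sub.path u v' jdx ++ [sk.sub.emb v'])) :=
          Finset.single_le_sum (f := fun u => ∑ v' : (skeleton H Gs w t).V,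
            ∑ jdx : Fin ((skeleton H Gs w t).m u v'),
            adjCount v z (sk.sub.emb u :: (sk.sub.path u v' jdx ++ [sk.sub.emb v'])))
            (fun _ _ => Nat.zero_le _) (Finset.mem_univ W)
  have hnat : t ≤ ∑ v ∈ A, ∑ z ∈ Aᶜ, G.m v z := by
    have h2 : t ≤ ∑ jdx : Fin ((skeleton H Gs w t).m W W'),
        ∑ v ∈ A, ∑ z ∈ Aᶜ, adjCount v z
          (sk.sub.emb W :: (sk.sub.path W W' jdx ++ [sk.sub.emb W'])) := by
      calc t = ∑ _jdx : Fin ((skeleton H Gs w t).m W W'), 1 := by simp [hskm]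
        _ ≤ _ := Finset.sum_le_sum fun jdx _ => hcount jdx
    have h3 : ∑ jdx : Fin ((skeleton H Gs w t).m W W'),
        ∑ v ∈ A, ∑ z ∈ Aᶜ, adjCount v z
          (sk.sub.emb W :: (sk.sub.path W W' jdx ++ [sk.sub.emb W']))
        = ∑ v ∈ A, ∑ z ∈ Aᶜ, ∑ jdx : Fin ((skeleton H Gs w t).m W W'),
          adjCount v z (sk.sub.emb W :: (sk.sub.path W W' jdx ++ [sk.sub.emb W'])) := by
      rw [Finset.sum_comm]
      exact Finset.sum_congr rfl fun v _ => Finset.sum_comm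
    calc t ≤ _ := h2
      _ = _ := h3
      _ ≤ ∑ v ∈ A, ∑ z ∈ Aᶜ, G.m v z :=
        Finset.sum_le_sum fun v _ => Finset.sum_le_sum fun z _ => hedge v z
  calc (t : ℤ) ≤ ∑ v ∈ A, ∑ z ∈ Aᶜ, (G.m v z : ℤ) := by exact_mod_cast hnat
    _ ≤ ∑ v ∈ A, D v := Finset.sum_le_sum fun v hv => hA v hv

end Counting

/-- For an `(H, t)`-skewered graph `G` over connected loopless multigraphs
`G₁, …, G_n` with base vertices `w₁, …, w_n`, if `D` is a divisor on `G` of rank at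
least 1 which is `w₁`-reduced and `deg(D) < t`, then `D` is `w_i`-reduced for every `i`
and the restriction of `D` to each `G_i` has rank at least 1 on `G_i`. -/
theorem skewered_reduced_divisor_restricts
    {n : ℕ} (hn : 0 < n) (H : SimpleGraph (Fin n)) [DecidableRel H.Adj]
    (hH : H.Connected)
    (Gs : Fin n → Multigraph) (hGs : ∀ i, (Gs i).Connected)
    (w : ∀ i, (Gs i).V) (t : ℕ) (ht : 1 ≤ t)
    (G : Multigraph) (sk : Skewered H Gs w t G)
    (D : G.Divisor) (hrank : 1 ≤ G.rank D)
    (hred : G.Reduced D (sk.sub.emb ⟨⟨0, hn⟩, w ⟨0, hn⟩⟩))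
    (hdeg : G.deg D < (t : ℤ)) :
    (∀ i : Fin n, G.Reduced D (sk.sub.emb ⟨i, w i⟩)) ∧
    (∀ i : Fin n, 1 ≤ (Gs i).rank (fun u => D (sk.sub.emb ⟨i, u⟩))) := by
  haveI : Nonempty G.V := ⟨sk.sub.emb ⟨⟨0, hn⟩, w ⟨0, hn⟩⟩⟩
  have hRG1 : G.RankGe D 1 := Multigraph.rankGe_one_of_one_le_rank hrank
  have hRG0 : G.RankGe D 0 := Multigraph.rankGe_mono hRG1 (by omega)
  obtain ⟨F0, hF0, hP0⟩ := hRG0 (fun _ => 0) (fun _ => le_refl 0) (by simp [Multigraph.deg])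
  obtain ⟨x0, hx0⟩ := hP0
  have hx0' : ∀ v, D v - F0 v = ∑ u, (G.m v u : ℤ) * (x0 v - x0 u) := by
    intro v; have := hx0 v; simpa using this
  obtain ⟨A₀, hA₀ne, hA₀valid, hA₀ge, -⟩ := Multigraph.argmax_valid hF0 x0 hx0'
  have heff : G.Effective D := by
    intro v
    by_cases hv : v = sk.sub.emb ⟨⟨0, hn⟩, w ⟨0, hn⟩⟩
    · subst hv
      have hm := hred.2 A₀ hA₀valid hA₀ne
      exact le_trans (hF0 _) (hA₀ge _ hm)
    · exact hred.1 v hv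
  have hsum_le : ∀ A : Finset G.V, (∑ v ∈ A, D v) ≤ G.deg D := by
    intro A
    unfold Multigraph.deg
    rw [← Finset.sum_add_sum_compl A]
    have : 0 ≤ ∑ v ∈ Aᶜ, D v := Finset.sum_nonneg fun v _ => heff v
    linarith
  have hmaster : ∀ A : Finset G.V, G.Valid D A → A.Nonempty →
      ∀ i : Fin n, sk.sub.emb ⟨i, w i⟩ ∈ A := by
    intro A hA hAne i
    by_contra hout
    have h0 : sk.sub.emb ⟨⟨0, hn⟩, w ⟨0, hn⟩⟩ ∈ A := hred.2 A hA hAne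
    obtain ⟨p⟩ := hH.preconnected ⟨0, hn⟩ i
    have hcross : ∀ (a b : Fin n) (p : H.Walk a b), sk.sub.emb ⟨a, w a⟩ ∈ A →
        sk.sub.emb ⟨b, w b⟩ ∉ A →
        ∃ i' j', H.Adj i' j' ∧ sk.sub.emb ⟨i', w i'⟩ ∈ A ∧ sk.sub.emb ⟨j', w j'⟩ ∉ A := by
      intro a b p
      induction p with
      | nil => intro h1 h2; exact absurd h1 h2
      | @cons a c b hadj q ih =>
        intro h1 h2
        by_cases hm : sk.sub.emb ⟨c, w c⟩ ∈ A
        · exact ih hm h2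
        · exact ⟨a, c, hadj, h1, hm⟩
    obtain ⟨i', j', hadj, hin', hout'⟩ := hcross _ _ p h0 hout
    have h1 := valid_chips_ge sk hA hadj hin' hout'
    have h2 := hsum_le A
    linarith
  refine ⟨fun i => ⟨fun v _ => heff v, fun A hA hAne => hmaster A hA hAne i⟩, ?_⟩
  intro i
  haveI : Nonempty (Gs i).V := ⟨w i⟩
  have hι : ∀ a : (Gs i).V, sk.sub.emb ⟨i, a⟩ = sk.sub.emb ⟨i, a⟩ := fun _ => rfl
  clear hι
  apply Multigraph.one_le_rank_of_rankGe_one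
  intro E hE hdE
  classical
  let ι : (Gs i).V → G.V := fun a => sk.sub.emb ⟨i, a⟩
  have hinj : Function.Injective ι := by
    intro a b h
    have h2 := sk.sub.inj h
    exact eq_of_heq (Sigma.mk.inj_iff.mp h2).2
  have hm_intra : ∀ a b, G.m (ι a) (ι b) = (Gs i).m a b :=
    fun a b => m_emb_intra sk i a b
  have hm_ext : ∀ a, a ≠ w i → ∀ z, (∀ b, z ≠ ι b) → G.m (ι a) z = 0 :=
    fun a ha z hz => m_emb_external sk i a ha z hz
  have hEGat : ∀ a, (∑ a' : (Gs i).V, if ι a = ι a' then E a' else 0) = E a := by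
    intro a
    have hc : ∀ a' ∈ Finset.univ, (if ι a = ι a' then E a' else 0)
        = if a' = a then E a' else 0 := by
      intro a' _
      by_cases h : a' = a
      · subst h; simp
      · rw [if_neg (fun hc => h (hinj hc).symm), if_neg h]
    rw [Finset.sum_congr rfl hc, Finset.sum_ite_eq']
    simp
  have hEGeff : G.Effective (fun y => ∑ a, if y = ι a then E a else 0) := by
    intro y
    refine Finset.sum_nonneg fun a _ => ?_
    split
    · exact hE a
    · exact le_refl 0
  have hEGdeg : G.deg (fun y => ∑ a, if y = ι a then E a else 0) = 1 := by
    unfold Multigraph.deg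
    rw [Finset.sum_comm]
    have hrow : ∀ a, (∑ y : G.V, if y = ι a then E a else 0) = E a := by
      intro a; rw [Finset.sum_ite_eq']; simp
    rw [Finset.sum_congr rfl fun a _ => hrow a]
    unfold Multigraph.deg at hdE
    exact hdE
  obtain ⟨F, hF, hPr⟩ := hRG1 (fun y => ∑ a, if y = ι a then E a else 0) hEGeff hEGdeg
  obtain ⟨x, hx⟩ := hPr
  have hx' : ∀ v, (D v - ∑ a, (if v = ι a then E a else 0)) - F v
      = ∑ u, (G.m v u : ℤ) * (x v - x u) := fun v => hx v
  obtain ⟨A, hAne, hAvalid, hAge, hAmax⟩ :=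
    Multigraph.argmax_valid (D := fun v => D v - ∑ a, (if v = ι a then E a else 0)) hF x hx'
  have hAvD : G.Valid D A := Multigraph.valid_mono hAvalid fun v => by
    have h0 : (0:ℤ) ≤ ∑ a, (if v = ι a then E a else 0) := hEGeff v
    omega
  have hwA : ι (w i) ∈ A := hmaster A hAvD hAne i
  have hxmax : ∀ z, x z ≤ x (ι (w i)) := fun z => hAmax _ hwA z
  refine ⟨fun a => (D (ι a) - E a) - ∑ b, ((Gs i).m a b : ℤ) * (x (ι a) - x (ι b)), ?_, ?_⟩
  · intro a
    show 0 ≤ (D (ι a) - E a) - ∑ b, ((Gs i).m a b : ℤ) * (x (ι a) - x (ι b))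
    have hGeq : (D (ι a) - E a) - F (ι a) = ∑ z, (G.m (ι a) z : ℤ) * (x (ι a) - x z) := by
      rw [← hEGat a]
      exact hx' (ι a)
    have hFa := hF (ι a)
    have hclaim : ∑ b, ((Gs i).m a b : ℤ) * (x (ι a) - x (ι b))
        ≤ ∑ z, (G.m (ι a) z : ℤ) * (x (ι a) - x z) := by
      have himg : ∑ z ∈ Finset.univ.image ι, (G.m (ι a) z : ℤ) * (x (ι a) - x z)
          = ∑ b, ((Gs i).m a b : ℤ) * (x (ι a) - x (ι b)) := by
        rw [Finset.sum_image (fun b _ c _ h => hinj h)]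
        exact Finset.sum_congr rfl fun b _ => by rw [hm_intra a b]
      have hsplit := Finset.sum_sdiff (s₁ := Finset.univ.image ι) (s₂ := Finset.univ)
        (f := fun z => (G.m (ι a) z : ℤ) * (x (ι a) - x z)) (Finset.subset_univ _)
      have hrest : 0 ≤ ∑ z ∈ Finset.univ \ Finset.univ.image ι,
          (G.m (ι a) z : ℤ) * (x (ι a) - x z) := by
        refine Finset.sum_nonneg fun z hz => ?_
        rw [Finset.mem_sdiff] at hz
        have hzext : ∀ b : (Gs i).V, z ≠ ι b := by
          intro b hb
          exact hz.2 (Finset.mem_image.mpr ⟨b, Finset.mem_univ b, hb.symm⟩)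
        by_cases ha : a = w i
        · have hxz : x z ≤ x (ι a) := by rw [ha]; exact hxmax z
          have hc := Int.natCast_nonneg (G.m (ι a) z)
          nlinarith
        · rw [hm_ext a ha z hzext]
          simp
      linarith
    linarith
  · exact ⟨fun a => x (ι a), fun a => by ring⟩
end
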